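/- arXiv:1907.00159 — 6 statements merged into one kernel-verified Lean document; each statement's English description precedes it below -/
import Mathlib

section
/- Let (R, I) be a ring with a set of enough idempotents I that admits a local valuation ν (a map ν : R → ℤ≥0 ∪ {−∞} with ν(x) = −∞ iff x = 0, ν(x − y) ≤ max(ν(x), ν(y)), and ν(xy) = ν(x) + ν(y) whenever x ∈ Re and y ∈ eR for some e ∈ I). Then R is non-singular, i.e., for every x ∈ R the left annihilator of x is an essential left ideal only when x = 0, and symmetrically on the right. -/
/-- A ring with enough idempotents: a distinguished set of nonzero pairwise
orthogonal idempotents whose finite sums of distinct elements form a set of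
local units. -/
structure EnoughIdempotents (R : Type*) [Ring R] where
  idem : Set R
  isIdem : ∀ e ∈ idem, e * e = e
  ne_zero : ∀ e ∈ idem, e ≠ (0 : R)
  orth : ∀ e ∈ idem, ∀ f ∈ idem, e ≠ f → e * f = 0
  localUnits : ∀ s : Finset R, ∃ F : Finset R, ↑F ⊆ idem ∧
      ∀ r ∈ s, (∑ e ∈ F, e) * r * (∑ e ∈ F, e) = r

/-- A local valuation on a ring with enough idempotents: a map
ν : R → ℤ≥0 ∪ {−∞} with ν(x) = −∞ iff x = 0, ν(x − y) ≤ max(ν(x), ν(y)),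
and ν(xy) = ν(x) + ν(y) whenever x ∈ Re and y ∈ eR for some e in the
distinguished set of idempotents. -/
structure LocalValuation {R : Type*} [Ring R] (E : EnoughIdempotents R) where
  ν : R → WithBot ℕ
  eq_bot_iff : ∀ x : R, ν x = ⊥ ↔ x = 0
  sub_le : ∀ x y : R, ν (x - y) ≤ max (ν x) (ν y)
  mul_eq : ∀ e ∈ E.idem, ∀ x y : R, x * e = x → e * y = y → ν (x * y) = ν x + ν y

/-- The left annihilator of `x`, as a left ideal. -/
def leftAnnihilator (R : Type*) [Ring R] (x : R) : Submodule R R where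
  carrier := {y : R | y * x = 0}
  add_mem' := by
    intro a b ha hb
    simp only [Set.mem_setOf_eq] at *
    rw [add_mul, ha, hb, add_zero]
  zero_mem' := by simp
  smul_mem' := by
    intro c y hy
    simp only [Set.mem_setOf_eq, smul_eq_mul] at *
    rw [mul_assoc, hy, mul_zero]

/-- The right annihilator of `x`, as a right ideal (a submodule over `Rᵐᵒᵖ`). -/
def rightAnnihilator (R : Type*) [Ring R] (x : R) : Submodule Rᵐᵒᵖ R where
  carrier := {y : R | x * y = 0}
  add_mem' := by
    intro a b ha hb
    simp only [Set.mem_setOf_eq] at *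
    rw [mul_add, ha, hb, add_zero]
  zero_mem' := by simp
  smul_mem' := by
    intro c y hy
    simp only [Set.mem_setOf_eq, MulOpposite.smul_eq_mul_unop] at *
    rw [← mul_assoc, hy, zero_mul]

/-- If a ring with enough idempotents admits a local valuation, then it is
non-singular: the left annihilator of `x` is an essential left ideal only
when `x = 0`, and symmetrically on the right. -/
theorem nonsingular_of_localValuation {R : Type*} [Ring R]
    (E : EnoughIdempotents R) (V : LocalValuation E) :
    (∀ x : R, (∀ b : Submodule R R, leftAnnihilator R x ⊓ b = ⊥ → b = ⊥) → x = 0) ∧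
    (∀ x : R, (∀ b : Submodule Rᵐᵒᵖ R, rightAnnihilator R x ⊓ b = ⊥ → b = ⊥) → x = 0) := by
  -- common preparation: for x ≠ 0 find idempotents e f with e*x*f ≠ 0
  have key : ∀ x : R, x ≠ 0 → ∃ e ∈ E.idem, ∃ f ∈ E.idem, e * x * f ≠ 0 := by
    intro x hx
    obtain ⟨F, hF, hloc⟩ := E.localUnits {x}
    have hu := hloc x (Finset.mem_singleton_self x)
    by_contra h
    push_neg at h
    apply hx
    rw [← hu, Finset.sum_mul, Finset.sum_mul]
    apply Finset.sum_eq_zero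
    intro e he
    rw [Finset.mul_sum]
    apply Finset.sum_eq_zero
    intro f hf
    exact h e (hF he) f (hF hf)
  constructor
  · intro x hess
    by_contra hx
    obtain ⟨e, he, f, hf, hz⟩ := key x hx
    set z := e * x * f with hzdef
    have hez : e * z = z := by
      rw [hzdef, ← mul_assoc, ← mul_assoc, E.isIdem e he]
    let b : Submodule R R :=
      { carrier := {a : R | a * e = a}
        add_mem' := by
          intro a c ha hc
          simp only [Set.mem_setOf_eq] at *
          rw [add_mul, ha, hc]
        zero_mem' := by simp
        smul_mem' := by
          intro c a ha
          simp only [Set.mem_setOf_eq, smul_eq_mul] at *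
          rw [mul_assoc, ha] }
    have hb : b = ⊥ := by
      apply hess
      rw [Submodule.eq_bot_iff]
      rintro a ⟨ha1, ha2⟩
      have hax : a * x = 0 := ha1
      have hae : a * e = a := ha2
      have haz : a * z = 0 := by
        rw [hzdef, ← mul_assoc, ← mul_assoc, hae, hax, zero_mul]
      have hν := V.mul_eq e he a z hae hez
      rw [haz, (V.eq_bot_iff 0).mpr rfl] at hν
      rcases (WithBot.add_eq_bot).mp hν.symm with h1 | h2
      · exact (V.eq_bot_iff a).mp h1
      · exact absurd ((V.eq_bot_iff z).mp h2) hz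
    have heb : e ∈ b := E.isIdem e he
    rw [hb] at heb
    exact E.ne_zero e he (Submodule.mem_bot R |>.mp heb)
  · intro x hess
    by_contra hx
    obtain ⟨e, he, f, hf, hz⟩ := key x hx
    set z := e * x * f with hzdef
    have hzf : z * f = z := by
      rw [hzdef, mul_assoc (e * x), E.isIdem f hf]
    let b : Submodule Rᵐᵒᵖ R :=
      { carrier := {a : R | f * a = a}
        add_mem' := by
          intro a c ha hc
          simp only [Set.mem_setOf_eq] at *
          rw [mul_add, ha, hc]
        zero_mem' := by simp
        smul_mem' := by
          intro c a ha
          simp only [Set.mem_setOf_eq, MulOpposite.smul_eq_mul_unop] at *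
          rw [← mul_assoc, ha] }
    have hb : b = ⊥ := by
      apply hess
      rw [Submodule.eq_bot_iff]
      rintro a ⟨ha1, ha2⟩
      have hxa : x * a = 0 := ha1
      have hfa : f * a = a := ha2
      have hza : z * a = 0 := by
        rw [hzdef, mul_assoc, mul_assoc, hfa, hxa, mul_zero]
      have hν := V.mul_eq f hf z a hzf hfa
      rw [hza, (V.eq_bot_iff 0).mpr rfl] at hν
      rcases (WithBot.add_eq_bot).mp hν.symm with h1 | h2
      · exact absurd ((V.eq_bot_iff z).mp h1) hz
      · exact (V.eq_bot_iff a).mp h2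
    have hfb : f ∈ b := E.isIdem f hf
    rw [hb] at hfb
    exact E.ne_zero f hf (Submodule.mem_bot Rᵐᵒᵖ |>.mp hfb)
end

section
/- Let (R, I) be a nonzero ring with enough idempotents that is connected (meaning eRf ≠ 0 for all e, f ∈ I) and admits a local valuation. Then R is a prime ring: for any ideals 𝔞, 𝔟 of R, 𝔞𝔟 = 0 implies 𝔞 = 0 or 𝔟 = 0. -/
/-- `(R, I)` is connected if `eRf ≠ 0` for all `e, f ∈ I`. -/
def EnoughIdempotents.Connected {R : Type*} [Ring R] (E : EnoughIdempotents R) : Prop :=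
  ∀ e ∈ E.idem, ∀ f ∈ E.idem, ∃ r : R, e * r * f ≠ 0

lemma sandwich_exists {R : Type*} [Ring R] (E : EnoughIdempotents R) {x : R} (hx : x ≠ 0) :
    ∃ e ∈ E.idem, ∃ f ∈ E.idem, e * x * f ≠ 0 := by
  obtain ⟨F, hF, hloc⟩ := E.localUnits {x}
  by_contra hc
  push_neg at hc
  apply hx
  have h0 : ∀ e ∈ F, ∀ f ∈ F, e * x * f = 0 := fun e he f hf => hc e (hF he) f (hF hf)
  calc x = (∑ e ∈ F, e) * x * (∑ e ∈ F, e) := (hloc x (by simp)).symm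
    _ = ∑ e ∈ F, ∑ f ∈ F, e * x * f := by
        simp only [Finset.sum_mul, Finset.mul_sum]
        exact Finset.sum_comm
    _ = 0 := by
        apply Finset.sum_eq_zero
        intro e he
        exact Finset.sum_eq_zero fun f hf => h0 e he f hf

/-- A nonzero connected ring with enough idempotents admitting a local valuation
is a prime ring: `𝔞𝔟 = 0` implies `𝔞 = 0` or `𝔟 = 0` for two-sided ideals. -/
theorem prime_of_connected_localValuation {R : Type*} [Ring R] [Nontrivial R]
    (E : EnoughIdempotents R) (hconn : E.Connected) (V : LocalValuation E) :
    ∀ a b : TwoSidedIdeal R, (∀ x ∈ a, ∀ y ∈ b, x * y = 0) → a = ⊥ ∨ b = ⊥ := by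
  intro a b hab
  by_contra h
  push_neg at h
  obtain ⟨ha, hb⟩ := h
  obtain ⟨x, hxa, hx⟩ : ∃ x ∈ a, x ≠ 0 := by
    by_contra hc
    push_neg at hc
    exact ha (by ext z; simp only [TwoSidedIdeal.mem_bot]; exact ⟨fun hz => hc z hz, fun hz => hz ▸ a.zero_mem⟩)
  obtain ⟨y, hyb, hy⟩ : ∃ y ∈ b, y ≠ 0 := by
    by_contra hc
    push_neg at hc
    exact hb (by ext z; simp only [TwoSidedIdeal.mem_bot]; exact ⟨fun hz => hc z hz, fun hz => hz ▸ b.zero_mem⟩)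
  obtain ⟨e, he, f, hf, hxef⟩ := sandwich_exists E hx
  obtain ⟨g, hg, k, hk, hygk⟩ := sandwich_exists E hy
  obtain ⟨r, hr⟩ := hconn f hf g hg
  have hff : f * f = f := E.isIdem f hf
  have hgg : g * g = g := E.isIdem g hg
  have h1 : V.ν (f * r * g * (g * y * k)) = V.ν (f * r * g) + V.ν (g * y * k) := by
    apply V.mul_eq g hg
    · rw [mul_assoc, hgg]
    · simp only [← mul_assoc, hgg]
  have h2 : V.ν (e * x * f * (f * r * g * (g * y * k)))
      = V.ν (e * x * f) + V.ν (f * r * g * (g * y * k)) := by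
    apply V.mul_eq f hf
    · rw [mul_assoc, hff]
    · simp only [← mul_assoc, hff]
  have hνx' : V.ν (e * x * f) ≠ ⊥ := fun hbot => hxef ((V.eq_bot_iff _).mp hbot)
  have hνm : V.ν (f * r * g) ≠ ⊥ := fun hbot => hr ((V.eq_bot_iff _).mp hbot)
  have hνy' : V.ν (g * y * k) ≠ ⊥ := fun hbot => hygk ((V.eq_bot_iff _).mp hbot)
  have hne : V.ν (e * x * f * (f * r * g * (g * y * k))) ≠ ⊥ := by
    rw [h2, h1]
    simp only [ne_eq, WithBot.add_eq_bot, not_or]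
    exact ⟨hνx', hνm, hνy'⟩
  have hprod_ne : e * x * f * (f * r * g * (g * y * k)) ≠ 0 :=
    fun h0 => hne ((V.eq_bot_iff _).mpr h0)
  apply hprod_ne
  have hxa' : e * x * f * (f * r * g) ∈ a :=
    a.mul_mem_right _ _ (a.mul_mem_right _ _ (a.mul_mem_left _ _ hxa))
  have hyb' : g * y * k ∈ b := b.mul_mem_right _ _ (b.mul_mem_left _ _ hyb)
  rw [← mul_assoc]
  exact hab _ hxa' _ hyb'
end

section
/- Let (Ė, Λ) be a B-hypergraph. Then the H-monoid H(Ė, Λ) is a conical monoid: if x + y = 0 in H(Ė, Λ) then x = 0 and y = 0. -/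
/-- A bi-separated graph `Ė = (E, (C, S), (D, T))`: a graph together with a
row-separation `C` (a partition of each `s⁻¹(v)` into nonempty source-constant
classes), a column-separation `D` (likewise for ranges), such that each row
meets each column in at most one edge, together with distinguished subsets
`S ⊆ C_fin` and `T ⊆ D_fin`. -/
structure BSG (Vt Ed : Type) where
  src : Ed → Vt
  rng : Ed → Vt
  C : Set (Set Ed)
  D : Set (Set Ed)
  C_ne : ∀ X ∈ C, X.Nonempty
  C_src : ∀ X ∈ C, ∀ e ∈ X, ∀ f ∈ X, src e = src f
  C_disj : ∀ X ∈ C, ∀ X' ∈ C, X ≠ X' → Disjoint X X'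
  C_cover : ∀ e : Ed, ∃ X ∈ C, e ∈ X
  D_ne : ∀ Y ∈ D, Y.Nonempty
  D_rng : ∀ Y ∈ D, ∀ e ∈ Y, ∀ f ∈ Y, rng e = rng f
  D_disj : ∀ Y ∈ D, ∀ Y' ∈ D, Y ≠ Y' → Disjoint Y Y'
  D_cover : ∀ e : Ed, ∃ Y ∈ D, e ∈ Y
  CD_inter : ∀ X ∈ C, ∀ Y ∈ D, (X ∩ Y).Subsingleton
  S : Set (Set Ed)
  T : Set (Set Ed)
  S_sub : S ⊆ C
  S_fin : ∀ X ∈ S, X.Finite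
  T_sub : T ⊆ D
  T_fin : ∀ Y ∈ T, Y.Finite

namespace BSG

variable {Vt Ed : Type}

open Classical

/-- The common source of a row (or any nonempty source-constant set). -/
noncomputable def srcOf [Nonempty Vt] (G : BSG Vt Ed) (X : Set Ed) : Vt :=
  if h : X.Nonempty then G.src h.some else Classical.arbitrary Vt

/-- The common range of a column. -/
noncomputable def rngOf [Nonempty Vt] (G : BSG Vt Ed) (Y : Set Ed) : Vt :=
  if h : Y.Nonempty then G.rng h.some else Classical.arbitrary Vt

end BSG

/-- A B-hypergraph `(Ė, Λ)`: a bi-separated graph together with an index set of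
B-hyperedges `Λ`, partitioned into the five classes
`Λ_T^S, Λ_fin^S, Λ_∞^S, Λ_T^fin, Λ_T^∞` (encoded by `cls` with values
`0, 1, 2, 3, 4` respectively), and families `𝒳_λ ⊆ C`, `𝒴_λ ⊆ D` satisfying
the axioms of the definition. -/
structure BHyp (Vt Ed : Type) extends BSG Vt Ed where
  Lam : Type
  cls : Lam → Fin 5
  mX : Lam → Set (Set Ed)
  mY : Lam → Set (Set Ed)
  ax_notST : ∀ X ∈ C, X ∉ S → ∀ Y ∈ D, Y ∉ T → X ∩ Y = ∅
  ax_cross : ∀ a b : Lam, a ≠ b → ∀ X ∈ mX a, ∀ Y ∈ mY b, X ∩ Y = ∅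
  ax_meet : ∀ l : Lam, ∀ X ∈ mX l, ∀ Y ∈ mY l, (X ∩ Y).Nonempty
  ax_S : S = ⋃ l ∈ {l | cls l = 0 ∨ cls l = 1 ∨ cls l = 2}, mX l
  ax_T : T = ⋃ l ∈ {l | cls l = 0 ∨ cls l = 3 ∨ cls l = 4}, mY l
  ax_CfinS : {X ∈ C | X.Finite} \ S = ⋃ l ∈ {l | cls l = 3}, mX l
  ax_DfinT : {Y ∈ D | Y.Finite} \ T = ⋃ l ∈ {l | cls l = 1}, mY l
  ax_Cinf : C \ {X ∈ C | X.Finite} = ⋃ l ∈ {l | cls l = 4}, mX l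
  ax_Dinf : D \ {Y ∈ D | Y.Finite} = ⋃ l ∈ {l | cls l = 2}, mY l
  ax_disjX : ∀ a b : Lam, a ≠ b → Disjoint (mX a) (mX b)
  ax_disjY : ∀ a b : Lam, a ≠ b → Disjoint (mY a) (mY b)
  ax_XfinT : ∀ l : Lam, (cls l = 0 ∨ cls l = 3 ∨ cls l = 4) → (mX l).Finite
  ax_YfinS : ∀ l : Lam, (cls l = 0 ∨ cls l = 1 ∨ cls l = 2) → (mY l).Finite

namespace BHyp

variable {Vt Ed : Type} [Nonempty Vt]

/-- The set of sources `s(λ) = {s(X) | X ∈ 𝒳_λ}`. -/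
noncomputable def srcSet (G : BHyp Vt Ed) (l : G.Lam) : Set Vt :=
  G.toBSG.srcOf '' G.mX l

/-- The set of ranges `r(λ) = {r(Y) | Y ∈ 𝒴_λ}`. -/
noncomputable def rngSet (G : BHyp Vt Ed) (l : G.Lam) : Set Vt :=
  G.toBSG.rngOf '' G.mY l

/-- A subset `V ⊆ E⁰` is bisaturated if for each `λ ∈ Λ_T^S`,
`s(λ) ⊆ V ↔ r(λ) ⊆ V`. -/
def Bisaturated (G : BHyp Vt Ed) (V : Set Vt) : Prop :=
  ∀ l : G.Lam, G.cls l = 0 → (G.srcSet l ⊆ V ↔ G.rngSet l ⊆ V)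

end BHyp

/-- Generators of the `H`-monoid of a B-hypergraph: the vertices, the
generators `q_{λ,Z}` and the generators `p_{λ,W}`. -/
inductive HGen {Vt Ed : Type} (G : BHyp Vt Ed) : Type
  | vert : Vt → HGen G
  | q : G.Lam → Set (Set Ed) → HGen G
  | p : G.Lam → Set (Set Ed) → HGen G

namespace BHyp

variable {Vt Ed : Type} [Nonempty Vt]

/-- The formal sum `Σ_{X ∈ s} s(X)` of the sources of a finite family of rows,
as a multiset of generators. -/
noncomputable def srcMSum (G : BHyp Vt Ed) {s : Set (Set Ed)} (h : s.Finite) :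
    Multiset (HGen G) :=
  h.toFinset.val.map fun X => HGen.vert (G.toBSG.srcOf X)

/-- The formal sum `Σ_{Y ∈ s} r(Y)` of the ranges of a finite family of
columns. -/
noncomputable def rngMSum (G : BHyp Vt Ed) {s : Set (Set Ed)} (h : s.Finite) :
    Multiset (HGen G) :=
  h.toFinset.val.map fun Y => HGen.vert (G.toBSG.rngOf Y)

/-- The defining relations of the `H`-monoid `H(Ė, Λ)`. -/
inductive HRel (G : BHyp Vt Ed) : Multiset (HGen G) → Multiset (HGen G) → Prop
  | qrel (l : G.Lam) (hl : G.cls l = 0 ∨ G.cls l = 3 ∨ G.cls l = 4)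
      (Z : Set (Set Ed)) (hZ : Z ⊆ G.mY l) (hne : Z.Nonempty) (hfin : Z.Finite) :
      HRel G (G.srcMSum (G.ax_XfinT l hl)) (G.rngMSum hfin + {HGen.q l Z})
  | prel (l : G.Lam) (hl : G.cls l = 0 ∨ G.cls l = 1 ∨ G.cls l = 2)
      (W : Set (Set Ed)) (hW : W ⊆ G.mX l) (hne : W.Nonempty) (hfin : W.Finite) :
      HRel G (G.rngMSum (G.ax_YfinS l hl)) (G.srcMSum hfin + {HGen.p l W})
  | qmono (l : G.Lam) (hl : G.cls l = 0 ∨ G.cls l = 3 ∨ G.cls l = 4)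
      (Z₁ Z₂ : Set (Set Ed)) (hsub : Z₁ ⊆ Z₂) (hne : Z₁ ≠ Z₂) (h1 : Z₁.Nonempty)
      (hZ₂ : Z₂ ⊆ G.mY l) (hfin : Z₂.Finite) :
      HRel G {HGen.q l Z₁} ({HGen.q l Z₂} + G.rngMSum (hfin.subset (Set.diff_subset (s := Z₂) (t := Z₁))))
  | pmono (l : G.Lam) (hl : G.cls l = 0 ∨ G.cls l = 1 ∨ G.cls l = 2)
      (W₁ W₂ : Set (Set Ed)) (hsub : W₁ ⊆ W₂) (hne : W₁ ≠ W₂) (h1 : W₁.Nonempty)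
      (hW₂ : W₂ ⊆ G.mX l) (hfin : W₂.Finite) :
      HRel G {HGen.p l W₁} ({HGen.p l W₂} + G.srcMSum (hfin.subset (Set.diff_subset (s := W₂) (t := W₁))))
  | qzero (l : G.Lam) (hl : G.cls l = 0) : HRel G {HGen.q l (G.mY l)} 0
  | pzero (l : G.Lam) (hl : G.cls l = 0) : HRel G {HGen.p l (G.mX l)} 0

/-- The `H`-monoid `H(Ė, Λ)`: the abelian monoid generated by
`E⁰ ⊔ Q ⊔ P` modulo the defining relations. -/
def HMon (G : BHyp Vt Ed) : Type :=
  (addConGen (HRel G)).Quotient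

noncomputable instance (G : BHyp Vt Ed) : AddCommMonoid (HMon G) := by
  unfold HMon; infer_instance

/-- The class of a formal sum in the `H`-monoid. -/
def hmk (G : BHyp Vt Ed) (x : Multiset (HGen G)) : HMon G :=
  (addConGen (HRel G)).mk' x

end BHyp

open BHyp
section ConicalAux

variable {Vt Ed : Type} [Nonempty Vt] (G : BHyp Vt Ed)

private lemma fin5cases (c : Fin 5) : c = 0 ∨ c = 1 ∨ c = 2 ∨ c = 3 ∨ c = 4 := by
  revert c; decide

omit [Nonempty Vt] in
private lemma mX_sub_C (l : G.Lam) : G.mX l ⊆ G.C := by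
  intro X hX
  rcases fin5cases (G.cls l) with h | h | h | h | h
  · have : X ∈ G.S := by rw [G.ax_S]; exact Set.mem_biUnion (by simp [h]) hX
    exact G.S_sub this
  · have : X ∈ G.S := by rw [G.ax_S]; exact Set.mem_biUnion (by simp [h]) hX
    exact G.S_sub this
  · have : X ∈ G.S := by rw [G.ax_S]; exact Set.mem_biUnion (by simp [h]) hX
    exact G.S_sub this
  · have : X ∈ {X ∈ G.C | X.Finite} \ G.S := by
      rw [G.ax_CfinS]; exact Set.mem_biUnion (by simp [h]) hX
    exact this.1.1
  · have : X ∈ G.C \ {X ∈ G.C | X.Finite} := by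
      rw [G.ax_Cinf]; exact Set.mem_biUnion (by simp [h]) hX
    exact this.1

omit [Nonempty Vt] in
private lemma mY_sub_D (l : G.Lam) : G.mY l ⊆ G.D := by
  intro Y hY
  rcases fin5cases (G.cls l) with h | h | h | h | h
  · have : Y ∈ G.T := by rw [G.ax_T]; exact Set.mem_biUnion (by simp [h]) hY
    exact G.T_sub this
  · have : Y ∈ {Y ∈ G.D | Y.Finite} \ G.T := by
      rw [G.ax_DfinT]; exact Set.mem_biUnion (by simp [h]) hY
    exact this.1.1
  · have : Y ∈ G.D \ {Y ∈ G.D | Y.Finite} := by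
      rw [G.ax_Dinf]; exact Set.mem_biUnion (by simp [h]) hY
    exact this.1
  · have : Y ∈ G.T := by rw [G.ax_T]; exact Set.mem_biUnion (by simp [h]) hY
    exact G.T_sub this
  · have : Y ∈ G.T := by rw [G.ax_T]; exact Set.mem_biUnion (by simp [h]) hY
    exact G.T_sub this

omit [Nonempty Vt] in
private lemma coverX {X : Set Ed} (hX : X ∈ G.C) : ∃ l, X ∈ G.mX l := by
  by_cases hS : X ∈ G.S
  · rw [G.ax_S] at hS
    obtain ⟨l, -, hl⟩ := Set.mem_iUnion₂.1 hS
    exact ⟨l, hl⟩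
  · by_cases hf : X.Finite
    · have : X ∈ {X ∈ G.C | X.Finite} \ G.S := ⟨⟨hX, hf⟩, hS⟩
      rw [G.ax_CfinS] at this
      obtain ⟨l, -, hl⟩ := Set.mem_iUnion₂.1 this
      exact ⟨l, hl⟩
    · have : X ∈ G.C \ {X ∈ G.C | X.Finite} := ⟨hX, fun h => hf h.2⟩
      rw [G.ax_Cinf] at this
      obtain ⟨l, -, hl⟩ := Set.mem_iUnion₂.1 this
      exact ⟨l, hl⟩

omit [Nonempty Vt] in
private lemma coverY {Y : Set Ed} (hY : Y ∈ G.D) : ∃ l, Y ∈ G.mY l := by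
  by_cases hT : Y ∈ G.T
  · rw [G.ax_T] at hT
    obtain ⟨l, -, hl⟩ := Set.mem_iUnion₂.1 hT
    exact ⟨l, hl⟩
  · by_cases hf : Y.Finite
    · have : Y ∈ {Y ∈ G.D | Y.Finite} \ G.T := ⟨⟨hY, hf⟩, hT⟩
      rw [G.ax_DfinT] at this
      obtain ⟨l, -, hl⟩ := Set.mem_iUnion₂.1 this
      exact ⟨l, hl⟩
    · have : Y ∈ G.D \ {Y ∈ G.D | Y.Finite} := ⟨hY, fun h => hf h.2⟩
      rw [G.ax_Dinf] at this
      obtain ⟨l, -, hl⟩ := Set.mem_iUnion₂.1 this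
      exact ⟨l, hl⟩

omit [Nonempty Vt] in
private lemma mX_nonempty {l : G.Lam} {Y : Set Ed} (hY : Y ∈ G.mY l) :
    (G.mX l).Nonempty := by
  have hYD : Y ∈ G.D := mY_sub_D G l hY
  obtain ⟨e, he⟩ := G.D_ne Y hYD
  obtain ⟨X, hXC, heX⟩ := G.C_cover e
  obtain ⟨l', hl'⟩ := coverX G hXC
  by_cases h : l' = l
  · exact ⟨X, h ▸ hl'⟩
  · have := G.ax_cross l' l h X hl' Y hY
    exact absurd (Set.mem_inter heX he) (by simp [this])

omit [Nonempty Vt] in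
private lemma mY_nonempty {l : G.Lam} {X : Set Ed} (hX : X ∈ G.mX l) :
    (G.mY l).Nonempty := by
  have hXC : X ∈ G.C := mX_sub_C G l hX
  obtain ⟨e, he⟩ := G.C_ne X hXC
  obtain ⟨Y, hYD, heY⟩ := G.D_cover e
  obtain ⟨l', hl'⟩ := coverY G hYD
  by_cases h : l = l'
  · exact ⟨Y, h ▸ hl'⟩
  · have := G.ax_cross l l' h X hX Y hl'
    exact absurd (Set.mem_inter he heY) (by simp [this])

/-- Generators whose class in the `H`-monoid is trivially zero. -/
private def NullGen : HGen G → Prop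
  | .vert _ => False
  | .q l Z => G.cls l = 0 ∧ Z = G.mY l
  | .p l W => G.cls l = 0 ∧ W = G.mX l

private lemma hmk_map_add (a b : Multiset (HGen G)) :
    hmk G (a + b) = hmk G a + hmk G b :=
  map_add ((addConGen (HRel G)).mk') a b

private lemma hmk_zero : hmk G 0 = 0 :=
  map_zero ((addConGen (HRel G)).mk')

private lemma nullGen_hmk {g : HGen G} (h : NullGen G g) : hmk G {g} = 0 := by
  cases g with
  | vert v => exact absurd h id
  | q l Z =>
    obtain ⟨h0, rfl⟩ := h
    have : hmk G {HGen.q l (G.mY l)} = hmk G 0 :=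
      (addConGen (HRel G)).eq.2 (AddConGen.Rel.of _ _ (HRel.qzero l h0))
    rw [this, hmk_zero]
  | p l W =>
    obtain ⟨h0, rfl⟩ := h
    have : hmk G {HGen.p l (G.mX l)} = hmk G 0 :=
      (addConGen (HRel G)).eq.2 (AddConGen.Rel.of _ _ (HRel.pzero l h0))
    rw [this, hmk_zero]

private def AllNull (m : Multiset (HGen G)) : Prop := ∀ g ∈ m, NullGen G g

private lemma vert_mem_srcMSum {s : Set (Set Ed)} (h : s.Finite) {X : Set Ed}
    (hX : X ∈ s) : HGen.vert (G.toBSG.srcOf X) ∈ G.srcMSum h := by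
  simp only [BHyp.srcMSum, Multiset.mem_map]
  exact ⟨X, by simpa using hX, rfl⟩

private lemma vert_mem_rngMSum {s : Set (Set Ed)} (h : s.Finite) {Y : Set Ed}
    (hY : Y ∈ s) : HGen.vert (G.toBSG.rngOf Y) ∈ G.rngMSum h := by
  simp only [BHyp.rngMSum, Multiset.mem_map]
  exact ⟨Y, by simpa using hY, rfl⟩

private lemma not_allNull_src {s : Set (Set Ed)} (h : s.Finite) (hne : s.Nonempty)
    (m : Multiset (HGen G)) : ¬ AllNull G (G.srcMSum h + m) := by
  intro hall
  obtain ⟨X, hX⟩ := hne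
  exact hall _ (Multiset.mem_add.2 (Or.inl (vert_mem_srcMSum G h hX)))

private lemma not_allNull_rng {s : Set (Set Ed)} (h : s.Finite) (hne : s.Nonempty)
    (m : Multiset (HGen G)) : ¬ AllNull G (G.rngMSum h + m) := by
  intro hall
  obtain ⟨Y, hY⟩ := hne
  exact hall _ (Multiset.mem_add.2 (Or.inl (vert_mem_rngMSum G h hY)))

/-- The congruence "both sides consist of null generators, or neither". -/
private def nullCon : AddCon (Multiset (HGen G)) where
  r m n := AllNull G m ↔ AllNull G n
  iseqv := ⟨fun _ => Iff.rfl, Iff.symm, Iff.trans⟩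
  add' := by
    intro w x y z h1 h2
    constructor <;> intro hall g hg <;> rcases Multiset.mem_add.1 hg with hg' | hg'
    · exact (h1.1 fun g hg => hall g (Multiset.mem_add.2 (Or.inl hg))) g hg'
    · exact (h2.1 fun g hg => hall g (Multiset.mem_add.2 (Or.inr hg))) g hg'
    · exact (h1.2 fun g hg => hall g (Multiset.mem_add.2 (Or.inl hg))) g hg'
    · exact (h2.2 fun g hg => hall g (Multiset.mem_add.2 (Or.inr hg))) g hg'

private lemma hrel_le_nullCon : ∀ a b, HRel G a b → nullCon G a b := by
  intro a b hrel
  cases hrel with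
  | qrel l hl Z hZ hne hfin =>
    have hXne : (G.mX l).Nonempty := mX_nonempty G (hZ hne.some_mem)
    refine iff_of_false ?_ ?_
    · intro hall
      exact not_allNull_src G (G.ax_XfinT l hl) hXne 0 (by simpa using hall)
    · exact not_allNull_rng G hfin hne _
  | prel l hl W hW hne hfin =>
    have hYne : (G.mY l).Nonempty := mY_nonempty G (hW hne.some_mem)
    refine iff_of_false ?_ ?_
    · intro hall
      exact not_allNull_rng G (G.ax_YfinS l hl) hYne 0 (by simpa using hall)
    · exact not_allNull_src G hfin hne _
  | qmono l hl Z₁ Z₂ hsub hne h1 hZ₂ hfin =>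
    refine iff_of_false ?_ ?_
    · intro hall
      have := hall (HGen.q l Z₁) (Multiset.mem_singleton_self _)
      obtain ⟨-, rfl⟩ := this
      exact hne (le_antisymm hsub hZ₂)
    · intro hall
      have hdne : (Z₂ \ Z₁).Nonempty := Set.diff_nonempty.2 fun h => hne (le_antisymm hsub h)
      obtain ⟨Y, hY⟩ := hdne
      exact hall _ (Multiset.mem_add.2 (Or.inr (vert_mem_rngMSum G _ hY)))
  | pmono l hl W₁ W₂ hsub hne h1 hW₂ hfin =>
    refine iff_of_false ?_ ?_
    · intro hall
      have := hall (HGen.p l W₁) (Multiset.mem_singleton_self _)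
      obtain ⟨-, rfl⟩ := this
      exact hne (le_antisymm hsub hW₂)
    · intro hall
      have hdne : (W₂ \ W₁).Nonempty := Set.diff_nonempty.2 fun h => hne (le_antisymm hsub h)
      obtain ⟨X, hX⟩ := hdne
      exact hall _ (Multiset.mem_add.2 (Or.inr (vert_mem_srcMSum G _ hX)))
  | qzero l hl =>
    exact iff_of_true (fun g hg => by rw [Multiset.mem_singleton.1 hg]; exact ⟨hl, rfl⟩)
      (fun g hg => absurd hg (Multiset.notMem_zero g))
  | pzero l hl =>
    exact iff_of_true (fun g hg => by rw [Multiset.mem_singleton.1 hg]; exact ⟨hl, rfl⟩)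
      (fun g hg => absurd hg (Multiset.notMem_zero g))

private lemma allNull_hmk {m : Multiset (HGen G)} (h : AllNull G m) : hmk G m = 0 := by
  induction m using Multiset.induction with
  | empty => exact hmk_zero G
  | cons g s ih =>
    have : (g ::ₘ s) = ({g} + s : Multiset (HGen G)) := by
      simp [Multiset.singleton_add]
    rw [this, hmk_map_add]
    rw [nullGen_hmk G (h g (Multiset.mem_cons_self g s)),
      ih fun g' hg' => h g' (Multiset.mem_cons_of_mem hg'), add_zero]

end ConicalAux

/-- The `H`-monoid of a B-hypergraph is conical: `x + y = 0` implies
`x = 0` and `y = 0`. -/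
theorem hMonoid_conical {Vt Ed : Type} [Nonempty Vt] (G : BHyp Vt Ed) :
    ∀ x y : HMon G, x + y = 0 → x = 0 ∧ y = 0 := by
  intro x y hxy
  obtain ⟨a, rfl⟩ := AddCon.mk'_surjective (x : (addConGen (HRel G)).Quotient)
  obtain ⟨b, rfl⟩ := AddCon.mk'_surjective (y : (addConGen (HRel G)).Quotient)
  have hab : hmk G (a + b) = hmk G 0 := by
    rw [hmk_map_add, hmk_zero]; exact hxy
  have hgen : (addConGen (HRel G)) (a + b) 0 := (addConGen (HRel G)).eq.1 hab
  have hle : addConGen (HRel G) ≤ nullCon G := AddCon.addConGen_le.2 (hrel_le_nullCon G)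
  have hnull : AllNull G (a + b) := by
    refine (hle hgen).2 ?_
    intro g hg
    exact absurd hg (Multiset.notMem_zero g)
  have ha : AllNull G a := fun g hg => hnull g (Multiset.mem_add.2 (Or.inl hg))
  have hb : AllNull G b := fun g hg => hnull g (Multiset.mem_add.2 (Or.inr hg))
  exact ⟨allNull_hmk G ha, allNull_hmk G hb⟩
end

section
/- Let (Ė, Λ) be a regular hypergraph over a field K with Leavitt path algebra L. If d : E^0 → ℕ ∪ {∞} satisfies Σ_{X ∈ 𝒳_λ} d(s(X)) = Σ_{Y ∈ 𝒴_λ} d(r(Y)) for all λ ∈ Λ (with the convention that any sum involving ∞ equals ∞), then there exists a unital right L-module M with dim_K(Mv) = d(v) for every vertex v ∈ E^0. -/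
/-- A regular hypergraph: vertex set, hyperedge set, and for each hyperedge a
nonempty finite family of sources and a nonempty finite family of ranges. -/
structure RegHyper where
  V : Type
  Hy : Type
  nI : Hy → ℕ
  nJ : Hy → ℕ
  nI_pos : ∀ h, 0 < nI h
  nJ_pos : ∀ h, 0 < nJ h
  sIdx : ∀ h : Hy, Fin (nI h) → V
  rIdx : ∀ h : Hy, Fin (nJ h) → V

/-- Generators of the Leavitt path algebra of a hypergraph: the vertices `v`,
the edges `h_{ij}` and the ghost edges `h_{ij}^*`. -/
inductive HLGen (H : RegHyper) : Type
  | vert : H.V → HLGen H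
  | edge : (h : H.Hy) → Fin (H.nI h) → Fin (H.nJ h) → HLGen H
  | ghost : (h : H.Hy) → Fin (H.nI h) → Fin (H.nJ h) → HLGen H

variable (K : Type) [Field K]

open FreeAlgebra in
open Classical in
/-- The defining relations of the Leavitt path algebra `L_K(ℋ)` of a regular
hypergraph: (1) `uv = δ_{uv} u`; (2) `s(h)_i h_{ij} = h_{ij} = h_{ij} r(h)_j`
and `r(h)_j h_{ij}^* = h_{ij}^* = h_{ij}^* s(h)_i`; (3)
`Σ_j h_{ij} h_{kj}^* = δ_{ik} s(h)_i`; (4) `Σ_i h_{ij}^* h_{ik} = δ_{jk} r(h)_j`. -/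
inductive HLRel (H : RegHyper) :
    FreeAlgebra K (HLGen H) → FreeAlgebra K (HLGen H) → Prop
  | vv (u v : H.V) :
      HLRel H (ι K (HLGen.vert u) * ι K (HLGen.vert v))
        (if u = v then ι K (HLGen.vert u) else 0)
  | se (h : H.Hy) (i : Fin (H.nI h)) (j : Fin (H.nJ h)) :
      HLRel H (ι K (HLGen.vert (H.sIdx h i)) * ι K (HLGen.edge h i j)) (ι K (HLGen.edge h i j))
  | er (h : H.Hy) (i : Fin (H.nI h)) (j : Fin (H.nJ h)) :
      HLRel H (ι K (HLGen.edge h i j) * ι K (HLGen.vert (H.rIdx h j))) (ι K (HLGen.edge h i j))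
  | rg (h : H.Hy) (i : Fin (H.nI h)) (j : Fin (H.nJ h)) :
      HLRel H (ι K (HLGen.vert (H.rIdx h j)) * ι K (HLGen.ghost h i j)) (ι K (HLGen.ghost h i j))
  | gs (h : H.Hy) (i : Fin (H.nI h)) (j : Fin (H.nJ h)) :
      HLRel H (ι K (HLGen.ghost h i j) * ι K (HLGen.vert (H.sIdx h i))) (ι K (HLGen.ghost h i j))
  | ck1 (h : H.Hy) (i k : Fin (H.nI h)) :
      HLRel H (∑ j : Fin (H.nJ h), ι K (HLGen.edge h i j) * ι K (HLGen.ghost h k j))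
        (if i = k then ι K (HLGen.vert (H.sIdx h i)) else 0)
  | ck2 (h : H.Hy) (j k : Fin (H.nJ h)) :
      HLRel H (∑ i : Fin (H.nI h), ι K (HLGen.ghost h i j) * ι K (HLGen.edge h i k))
        (if j = k then ι K (HLGen.vert (H.rIdx h j)) else 0)

/-- The Leavitt path algebra of a regular hypergraph. -/
abbrev HLPA (H : RegHyper) : Type := RingQuot (HLRel K H)

/-- The images of the generators in `L_K(ℋ)`. -/
noncomputable def hlgen (H : RegHyper) (x : HLGen H) : HLPA K H :=
  RingQuot.mkAlgHom K (HLRel K H) (FreeAlgebra.ι K x)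

/-- A right `L`-module which is also a `K`-vector space, with the two actions
compatible. -/
structure HModule (H : RegHyper) where
  carrier : Type
  [acg : AddCommGroup carrier]
  [modK : Module K carrier]
  [modL : Module (HLPA K H)ᵐᵒᵖ carrier]
  central : ∀ (c : K) (a : (HLPA K H)ᵐᵒᵖ) (m : carrier), a • (c • m) = c • (a • m)

attribute [instance] HModule.acg HModule.modK HModule.modL

namespace HModule

variable {H : RegHyper} (M : HModule K H)

/-- Right multiplication by the vertex `v`, as a `K`-linear map `M → M`. -/
noncomputable def actV (v : H.V) : M.carrier →ₗ[K] M.carrier where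
  toFun m := MulOpposite.op (hlgen K H (HLGen.vert v)) • m
  map_add' a b := smul_add _ a b
  map_smul' c m := by simpa using M.central c (MulOpposite.op (hlgen K H (HLGen.vert v))) m

/-- The `K`-subspace `Mv = M·v`. -/
noncomputable def Msub (v : H.V) : Submodule K M.carrier :=
  LinearMap.range (HModule.actV K M v)

/-- `M` is unital: every element is of the form `m·(v₁ + ⋯ + v_l)` for finitely
many distinct vertices. -/
def Unital : Prop :=
  ∀ m : M.carrier, ∃ s : Finset H.V,
    MulOpposite.op (∑ v ∈ s, hlgen K H (HLGen.vert v)) • m = m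

end HModule

open HModule

namespace DimRealize

noncomputable section
open Classical Finsupp Cardinal

/-- A type of "dimension" `n ∈ ℕ∞`. -/
def idxT : ℕ∞ → Type := WithTop.recTopCoe ℕ Fin

lemma idxT_top : idxT ⊤ = ℕ := rfl
lemma idxT_coe (k : ℕ) : idxT (k : ℕ∞) = Fin k := rfl

instance idxT_countable : ∀ n : ℕ∞, Countable (idxT n)
  | ⊤ => inferInstanceAs (Countable ℕ)
  | (k : ℕ) => inferInstanceAs (Countable (Fin k))

lemma toENat_mk_idxT : ∀ n : ℕ∞, Cardinal.toENat #(idxT n) = n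
  | ⊤ => by
      show Cardinal.toENat #ℕ = ⊤
      rw [Cardinal.mk_nat]
      simp [Cardinal.toENat_eq_top]
  | (k : ℕ) => by
      show Cardinal.toENat #(Fin k) = (k : ℕ∞)
      simp [Cardinal.mk_fintype, Cardinal.toENat_nat]

/-- `toENat` of the cardinality of a finite sigma type is the sum of the
`toENat`s of the cardinalities of the fibers. -/
lemma toENat_mk_sigma : ∀ (n : ℕ) (A : Fin n → Type),
    Cardinal.toENat #(Σ i, A i) = ∑ i, Cardinal.toENat #(A i)
  | 0, A => by
      have : IsEmpty (Σ i : Fin 0, A i) := ⟨fun x => x.1.elim0⟩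
      simp [Cardinal.mk_eq_zero]
  | (n + 1), A => by
      have e : (Σ i : Fin (n + 1), A i) ≃ (A 0 ⊕ Σ i : Fin n, A i.succ) :=
        { toFun := fun x => Fin.cases (motive := fun i => A i → (A 0 ⊕ Σ i : Fin n, A i.succ))
            (fun a => Sum.inl a) (fun i a => Sum.inr ⟨i, a⟩) x.1 x.2
          invFun := Sum.elim (fun a => ⟨0, a⟩) (fun p => ⟨p.1.succ, p.2⟩)
          left_inv := by
            rintro ⟨i, a⟩
            induction i using Fin.cases <;> simp
          right_inv := by rintro (a | ⟨i, a⟩) <;> simp }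
      rw [Cardinal.mk_congr e, Cardinal.mk_sum, Cardinal.lift_id, Cardinal.lift_id,
        map_add, toENat_mk_sigma n (fun i => A i.succ), Fin.sum_univ_succ]

lemma mk_eq_of_toENat_eq {α β : Type} [Countable α] [Countable β]
    (h : Cardinal.toENat #α = Cardinal.toENat #β) : #α = #β := by
  have ha : #α ≤ Cardinal.aleph0 := Cardinal.mk_le_aleph0
  have hb : #β ≤ Cardinal.aleph0 := Cardinal.mk_le_aleph0
  rw [← Cardinal.ofENat_toENat ha, ← Cardinal.ofENat_toENat hb, h]

lemma op_sum {α : Type*} [AddCommMonoid α] {ι : Type*} (s : Finset ι) (f : ι → α) :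
    MulOpposite.op (∑ i ∈ s, f i) = ∑ i ∈ s, MulOpposite.op (f i) := by
  simpa using map_sum (MulOpposite.opAddEquiv : α ≃+ αᵐᵒᵖ) f s

section SigmaMaps

variable (K : Type) [Field K] {ι : Type} (A : ι → Type)

/-- Inclusion of the `i`-th summand into the direct sum `(Σ i, A i) →₀ K`. -/
def sInc (i : ι) : (A i →₀ K) →ₗ[K] ((Σ i, A i) →₀ K) :=
  Finsupp.lmapDomain K K (Sigma.mk i)

/-- Projection onto the `i`-th summand of the direct sum `(Σ i, A i) →₀ K`. -/
def sPrj (i : ι) : ((Σ i, A i) →₀ K) →ₗ[K] (A i →₀ K) :=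
  Finsupp.lcomapDomain (Sigma.mk i) sigma_mk_injective

lemma sPrj_sInc_same (i : ι) : sPrj K A i ∘ₗ sInc K A i = LinearMap.id := by
  apply LinearMap.ext; intro f
  apply Finsupp.ext; intro a
  simp [sPrj, sInc, Finsupp.lcomapDomain, Finsupp.comapDomain_apply,
    Finsupp.mapDomain_apply sigma_mk_injective]

lemma sPrj_sInc_ne {i k : ι} (hik : i ≠ k) : sPrj K A k ∘ₗ sInc K A i = 0 := by
  apply LinearMap.ext; intro f
  apply Finsupp.ext; intro a
  have hnr : (⟨k, a⟩ : Σ i, A i) ∉ Set.range (Sigma.mk i) := by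
    rintro ⟨a', ha'⟩
    exact hik (congrArg Sigma.fst ha')
  simp [sPrj, sInc, Finsupp.lcomapDomain, Finsupp.comapDomain_apply,
    Finsupp.mapDomain_notin_range _ _ hnr]

lemma sum_sInc_sPrj [Fintype ι] :
    ∑ i, (sInc K A i ∘ₗ sPrj K A i) = (LinearMap.id : ((Σ i, A i) →₀ K) →ₗ[K] _) := by
  apply LinearMap.ext; intro f
  apply Finsupp.ext; rintro ⟨i₀, a⟩
  rw [LinearMap.sum_apply, Finsupp.finset_sum_apply]
  rw [Finset.sum_eq_single i₀]
  · simp [sPrj, sInc, Finsupp.lcomapDomain, Finsupp.comapDomain_apply,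
      Finsupp.mapDomain_apply sigma_mk_injective]
  · intro b _ hb
    have hnr : (⟨i₀, a⟩ : Σ i, A i) ∉ Set.range (Sigma.mk b) := by
      rintro ⟨a', ha'⟩
      have hbi : b = i₀ := congrArg Sigma.fst ha'
      exact hb hbi
    simp [sPrj, sInc, Finsupp.lcomapDomain, Finsupp.mapDomain_notin_range _ _ hnr]
  · intro h; exact absurd (Finset.mem_univ i₀) h

lemma sum_sInc_sPrj_finset (s : Finset ι) (f : (Σ i, A i) →₀ K)
    (hs : ∀ x ∈ f.support, Sigma.fst x ∈ s) :
    ∑ v ∈ s, sInc K A v (sPrj K A v f) = f := by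
  apply Finsupp.ext; rintro ⟨i₀, a⟩
  rw [Finsupp.finset_sum_apply]
  by_cases hi : i₀ ∈ s
  · rw [Finset.sum_eq_single i₀]
    · simp [sPrj, sInc, Finsupp.lcomapDomain, Finsupp.comapDomain_apply,
        Finsupp.mapDomain_apply sigma_mk_injective]
    · intro b _ hb
      have hnr : (⟨i₀, a⟩ : Σ i, A i) ∉ Set.range (Sigma.mk b) := by
        rintro ⟨a', ha'⟩
        have hbi : b = i₀ := congrArg Sigma.fst ha'
        exact hb hbi
      simp [sPrj, sInc, Finsupp.lcomapDomain, Finsupp.mapDomain_notin_range _ _ hnr]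
    · intro h; exact absurd hi h
  · have hf0 : f ⟨i₀, a⟩ = 0 := by
      by_contra h
      exact hi (hs ⟨i₀, a⟩ (Finsupp.mem_support_iff.2 h))
    rw [hf0]
    apply Finset.sum_eq_zero
    intro b hb
    have hnr : (⟨i₀, a⟩ : Σ i, A i) ∉ Set.range (Sigma.mk b) := by
      rintro ⟨a', ha'⟩
      have hbi : b = i₀ := congrArg Sigma.fst ha'
      exact hi (hbi ▸ hb)
    simp [sPrj, sInc, Finsupp.lcomapDomain, Finsupp.mapDomain_notin_range _ _ hnr]

end SigmaMaps

end
end DimRealize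
namespace DimRealize

noncomputable section Main
open Classical Finsupp

variable {H : RegHyper} (d : H.V → ℕ∞)

/-- Fiber types over vertices. -/
abbrev AV : H.V → Type := fun v => idxT (d v)
/-- Fiber types over sources of a hyperedge. -/
abbrev AS (h : H.Hy) : Fin (H.nI h) → Type := fun i => idxT (d (H.sIdx h i))
/-- Fiber types over ranges of a hyperedge. -/
abbrev AR (h : H.Hy) : Fin (H.nJ h) → Type := fun j => idxT (d (H.rIdx h j))

variable (K : Type) [Field K]

/-- The underlying vector space of the module to be constructed. -/
abbrev M0 : Type := (Σ v : H.V, AV d v) →₀ K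

/-- The action of a vertex. -/
def Vt (v : H.V) : Module.End K (M0 d K) :=
  sInc K (AV d) v ∘ₗ sPrj K (AV d) v

variable (e : ∀ h : H.Hy, (Σ i, AS d h i) ≃ (Σ j, AR d h j))

/-- The isomorphism associated to a hyperedge. -/
def Phi (h : H.Hy) : ((Σ i, AS d h i) →₀ K) ≃ₗ[K] ((Σ j, AR d h j) →₀ K) :=
  Finsupp.domLCongr (e h)

/-- The action of an edge `h_{ij}`. -/
def Ed (h : H.Hy) (i : Fin (H.nI h)) (j : Fin (H.nJ h)) : Module.End K (M0 d K) :=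
  sInc K (AV d) (H.rIdx h j) ∘ₗ sPrj K (AR d h) j ∘ₗ (Phi d K e h).toLinearMap ∘ₗ
    sInc K (AS d h) i ∘ₗ sPrj K (AV d) (H.sIdx h i)

/-- The action of a ghost edge `h_{ij}^*`. -/
def Gh (h : H.Hy) (i : Fin (H.nI h)) (j : Fin (H.nJ h)) : Module.End K (M0 d K) :=
  sInc K (AV d) (H.sIdx h i) ∘ₗ sPrj K (AS d h) i ∘ₗ (Phi d K e h).symm.toLinearMap ∘ₗ
    sInc K (AR d h) j ∘ₗ sPrj K (AV d) (H.rIdx h j)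

lemma sPrj_sInc_same_apply {ι : Type} (A : ι → Type) (i : ι) (g : A i →₀ K) :
    sPrj K A i (sInc K A i g) = g :=
  LinearMap.congr_fun (sPrj_sInc_same K A i) g

lemma sPrj_sInc_ne_apply {ι : Type} (A : ι → Type) {i k : ι} (hik : i ≠ k) (g : A i →₀ K) :
    sPrj K A k (sInc K A i g) = 0 :=
  LinearMap.congr_fun (sPrj_sInc_ne K A hik) g

lemma vt_vt (u v : H.V) : Vt d K v * Vt d K u = if u = v then Vt d K u else 0 := by
  apply LinearMap.ext; intro m
  by_cases huv : u = v
  · subst huv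
    simp [Vt, Module.End.mul_apply, sPrj_sInc_same_apply]
  · simp [Vt, Module.End.mul_apply, huv, sPrj_sInc_ne_apply K (AV d) huv]

lemma ed_vt (h : H.Hy) (i : Fin (H.nI h)) (j : Fin (H.nJ h)) :
    Ed d K e h i j * Vt d K (H.sIdx h i) = Ed d K e h i j := by
  apply LinearMap.ext; intro m
  simp [Ed, Vt, Module.End.mul_apply, sPrj_sInc_same_apply]

lemma vt_ed (h : H.Hy) (i : Fin (H.nI h)) (j : Fin (H.nJ h)) :
    Vt d K (H.rIdx h j) * Ed d K e h i j = Ed d K e h i j := by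
  apply LinearMap.ext; intro m
  simp [Ed, Vt, Module.End.mul_apply, sPrj_sInc_same_apply]

lemma gh_vt (h : H.Hy) (i : Fin (H.nI h)) (j : Fin (H.nJ h)) :
    Gh d K e h i j * Vt d K (H.rIdx h j) = Gh d K e h i j := by
  apply LinearMap.ext; intro m
  simp [Gh, Vt, Module.End.mul_apply, sPrj_sInc_same_apply]

lemma vt_gh (h : H.Hy) (i : Fin (H.nI h)) (j : Fin (H.nJ h)) :
    Vt d K (H.sIdx h i) * Gh d K e h i j = Gh d K e h i j := by
  apply LinearMap.ext; intro m
  simp [Gh, Vt, Module.End.mul_apply, sPrj_sInc_same_apply]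

lemma sum_sInc_sPrj_apply {ι : Type} [Fintype ι] (A : ι → Type) (f : (Σ i, A i) →₀ K) :
    ∑ i, sInc K A i (sPrj K A i f) = f := by
  have := LinearMap.congr_fun (sum_sInc_sPrj K A) f
  simpa [LinearMap.sum_apply] using this

lemma ck1_rel (h : H.Hy) (i k : Fin (H.nI h)) :
    ∑ j : Fin (H.nJ h), Gh d K e h k j * Ed d K e h i j =
      if i = k then Vt d K (H.sIdx h i) else 0 := by
  apply LinearMap.ext; intro m
  rw [LinearMap.sum_apply]
  set x := (Phi d K e h).toLinearMap (sInc K (AS d h) i (sPrj K (AV d) (H.sIdx h i) m)) with hx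
  have step : ∀ j, (Gh d K e h k j * Ed d K e h i j) m =
      sInc K (AV d) (H.sIdx h k) (sPrj K (AS d h) k
        ((Phi d K e h).symm.toLinearMap (sInc K (AR d h) j (sPrj K (AR d h) j x)))) := by
    intro j
    simp only [Gh, Ed, Module.End.mul_apply, LinearMap.comp_apply, ← hx]
    rw [sPrj_sInc_same_apply]
  rw [Finset.sum_congr rfl fun j _ => step j]
  rw [← map_sum, ← map_sum, ← map_sum, sum_sInc_sPrj_apply]
  have hxinv : (Phi d K e h).symm.toLinearMap x = sInc K (AS d h) i (sPrj K (AV d) (H.sIdx h i) m) := by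
    rw [hx]
    exact (Phi d K e h).symm_apply_apply _
  rw [hxinv]
  by_cases hik : i = k
  · subst hik
    rw [sPrj_sInc_same_apply]
    simp [Vt, Module.End.mul_apply]
  · rw [sPrj_sInc_ne_apply K (AS d h) hik]
    simp [hik]

lemma ck2_rel (h : H.Hy) (j k : Fin (H.nJ h)) :
    ∑ i : Fin (H.nI h), Ed d K e h i k * Gh d K e h i j =
      if j = k then Vt d K (H.rIdx h j) else 0 := by
  apply LinearMap.ext; intro m
  rw [LinearMap.sum_apply]
  set x := (Phi d K e h).symm.toLinearMap (sInc K (AR d h) j (sPrj K (AV d) (H.rIdx h j) m)) with hx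
  have step : ∀ i, (Ed d K e h i k * Gh d K e h i j) m =
      sInc K (AV d) (H.rIdx h k) (sPrj K (AR d h) k
        ((Phi d K e h).toLinearMap (sInc K (AS d h) i (sPrj K (AS d h) i x)))) := by
    intro i
    simp only [Gh, Ed, Module.End.mul_apply, LinearMap.comp_apply, ← hx]
    rw [sPrj_sInc_same_apply]
  rw [Finset.sum_congr rfl fun i _ => step i]
  rw [← map_sum, ← map_sum, ← map_sum, sum_sInc_sPrj_apply]
  have hxinv : (Phi d K e h).toLinearMap x = sInc K (AR d h) j (sPrj K (AV d) (H.rIdx h j) m) := by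
    rw [hx]
    exact (Phi d K e h).apply_symm_apply _
  rw [hxinv]
  by_cases hjk : j = k
  · subst hjk
    rw [sPrj_sInc_same_apply]
    simp [Vt, Module.End.mul_apply]
  · rw [sPrj_sInc_ne_apply K (AR d h) hjk]
    simp [hjk]

/-- The generator map into the opposite of the endomorphism algebra. -/
def genMap : HLGen H → (Module.End K (M0 d K))ᵐᵒᵖ
  | HLGen.vert v => MulOpposite.op (Vt d K v)
  | HLGen.edge h i j => MulOpposite.op (Ed d K e h i j)
  | HLGen.ghost h i j => MulOpposite.op (Gh d K e h i j)

/-- The representation on the free algebra. -/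
def repF : FreeAlgebra K (HLGen H) →ₐ[K] (Module.End K (M0 d K))ᵐᵒᵖ :=
  FreeAlgebra.lift K (genMap d K e)

lemma repF_rel : ∀ ⦃a b⦄, HLRel K H a b → repF d K e a = repF d K e b := by
  intro a b r
  induction r with
  | vv u v =>
      rw [map_mul, apply_ite (repF d K e), map_zero]
      simp only [repF, FreeAlgebra.lift_ι_apply, genMap]
      rw [← MulOpposite.op_mul, vt_vt]
      split <;> simp
  | se h i j =>
      rw [map_mul]
      simp only [repF, FreeAlgebra.lift_ι_apply, genMap]
      rw [← MulOpposite.op_mul, ed_vt]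
  | er h i j =>
      rw [map_mul]
      simp only [repF, FreeAlgebra.lift_ι_apply, genMap]
      rw [← MulOpposite.op_mul, vt_ed]
  | rg h i j =>
      rw [map_mul]
      simp only [repF, FreeAlgebra.lift_ι_apply, genMap]
      rw [← MulOpposite.op_mul, gh_vt]
  | gs h i j =>
      rw [map_mul]
      simp only [repF, FreeAlgebra.lift_ι_apply, genMap]
      rw [← MulOpposite.op_mul, vt_gh]
  | ck1 h i k =>
      rw [map_sum, apply_ite (repF d K e), map_zero]
      simp only [map_mul, repF, FreeAlgebra.lift_ι_apply, genMap]
      simp only [← MulOpposite.op_mul]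
      rw [← op_sum, ck1_rel]
      split <;> simp
  | ck2 h j k =>
      rw [map_sum, apply_ite (repF d K e), map_zero]
      simp only [map_mul, repF, FreeAlgebra.lift_ι_apply, genMap]
      simp only [← MulOpposite.op_mul]
      rw [← op_sum, ck2_rel]
      split <;> simp

/-- The representation of the Leavitt path algebra. -/
def repL : HLPA K H →ₐ[K] (Module.End K (M0 d K))ᵐᵒᵖ :=
  RingQuot.liftAlgHom K ⟨repF d K e, repF_rel d K e⟩

lemma repL_gen (x : HLGen H) : repL d K e (hlgen K H x) = genMap d K e x := by
  rw [hlgen, repL, RingQuot.liftAlgHom_mkAlgHom_apply]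
  exact FreeAlgebra.lift_ι_apply _ _

/-- The right action, as a ring hom from the opposite algebra. -/
def theta : (HLPA K H)ᵐᵒᵖ →+* Module.End K (M0 d K) where
  toFun a := ((repL d K e) a.unop).unop
  map_one' := by simp
  map_mul' x y := by simp
  map_zero' := by simp
  map_add' x y := by simp

lemma theta_vert (v : H.V) :
    theta d K e (MulOpposite.op (hlgen K H (HLGen.vert v))) = Vt d K v := by
  show ((repL d K e) (hlgen K H (HLGen.vert v))).unop = Vt d K v
  rw [repL_gen]
  rfl

end Main
end DimRealize

/-- If `d : E⁰ → ℕ ∪ {∞}` satisfies `Σ_{X ∈ 𝒳_λ} d(s(X)) = Σ_{Y ∈ 𝒴_λ} d(r(Y))`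
for all hyperedges `λ`, then there is a unital right module `M` over the
Leavitt path algebra with `dim_K (Mv) = d(v)` for every vertex `v`. -/
theorem dimension_function_realizable {H : RegHyper} (d : H.V → ℕ∞)
    (hd : ∀ h : H.Hy, ∑ i : Fin (H.nI h), d (H.sIdx h i) = ∑ j : Fin (H.nJ h), d (H.rIdx h j)) :
    ∃ M : HModule K H, HModule.Unital K M ∧
      ∀ v : H.V, Cardinal.toENat (Module.rank K (HModule.Msub K M v)) = d v := by
  classical
  have hne : ∀ h : H.Hy,
      Nonempty ((Σ i, DimRealize.AS d h i) ≃ (Σ j, DimRealize.AR d h j)) := by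
    intro h
    apply Cardinal.eq.1
    apply DimRealize.mk_eq_of_toENat_eq
    rw [DimRealize.toENat_mk_sigma, DimRealize.toENat_mk_sigma]
    simp only [DimRealize.toENat_mk_idxT]
    exact hd h
  have e : ∀ h : H.Hy, (Σ i, DimRealize.AS d h i) ≃ (Σ j, DimRealize.AR d h j) :=
    fun h => Classical.choice (hne h)
  letI : Module (HLPA K H)ᵐᵒᵖ (DimRealize.M0 d K) :=
    Module.compHom _ (DimRealize.theta d K e)
  have hsmul : ∀ (a : (HLPA K H)ᵐᵒᵖ) (m : DimRealize.M0 d K),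
      a • m = DimRealize.theta d K e a m := fun _ _ => rfl
  refine ⟨{ carrier := DimRealize.M0 d K
            central := by
              intro c a m
              rw [hsmul, hsmul]
              exact (DimRealize.theta d K e a).map_smul c m }, ?_, ?_⟩
  · -- unital
    intro m
    refine ⟨m.support.image Sigma.fst, ?_⟩
    rw [hsmul, DimRealize.op_sum, map_sum]
    have : ∀ v : H.V, DimRealize.theta d K e (MulOpposite.op (hlgen K H (HLGen.vert v))) =
        DimRealize.Vt d K v := fun v => DimRealize.theta_vert d K e v
    rw [Finset.sum_congr rfl fun v _ => this v, LinearMap.sum_apply]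
    have hstep : ∀ v : H.V, DimRealize.Vt d K v m =
        DimRealize.sInc K (DimRealize.AV d) v (DimRealize.sPrj K (DimRealize.AV d) v m) :=
      fun v => rfl
    rw [Finset.sum_congr rfl fun v _ => hstep v]
    exact DimRealize.sum_sInc_sPrj_finset K (DimRealize.AV d) _ m
      (fun x hx => Finset.mem_image_of_mem Sigma.fst hx)
  · -- dimensions
    intro v
    have hact : HModule.actV K
        ({ carrier := DimRealize.M0 d K
           central := by
             intro c a m
             rw [hsmul, hsmul]
             exact (DimRealize.theta d K e a).map_smul c m } : HModule K H) v =
        DimRealize.Vt d K v := by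
      apply LinearMap.ext
      intro m
      show MulOpposite.op (hlgen K H (HLGen.vert v)) • m = _
      rw [hsmul, DimRealize.theta_vert]
    have hsurj : Function.Surjective (DimRealize.sPrj K (DimRealize.AV d) v) :=
      fun g => ⟨DimRealize.sInc K (DimRealize.AV d) v g,
        DimRealize.sPrj_sInc_same_apply K (DimRealize.AV d) v g⟩
    have hinj : Function.Injective (DimRealize.sInc K (DimRealize.AV d) v) :=
      fun x y hxy => Finsupp.mapDomain_injective sigma_mk_injective hxy
    have hr : LinearMap.range (DimRealize.Vt d K v) =
        LinearMap.range (DimRealize.sInc K (DimRealize.AV d) v) := by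
      rw [DimRealize.Vt, LinearMap.range_comp, LinearMap.range_eq_top.2 hsurj,
        Submodule.map_top]
    have hrank : Module.rank K
        ↥(LinearMap.range (DimRealize.sInc K (DimRealize.AV d) v)) =
        Cardinal.mk (DimRealize.idxT (d v)) := by
      have h1 := rank_range_of_injective (DimRealize.sInc K (DimRealize.AV d) v) hinj
      rw [h1]
      exact rank_finsupp_self' (R := K)
    rw [HModule.Msub, hact, hr, hrank]
    exact DimRealize.toENat_mk_idxT (d v)
end

section
/- Let (Ė, Λ) be a finite hypergraph with |Λ| = h hyperedge relations and |E^0| = n vertices, and suppose the confluence condition holds in the free abelian monoid T on E^0. Let A and B be the h × n nonnegative integer coefficient matrices of the left and right hand sides of the defining relations Σ_t s(X_t) = Σ_u r(Y_u) of the 𝒱-monoid of L_K(Ė). Then L_K(Ė) has Invariant Basis Number if and only if rank(Bᵗ − Aᵗ) < rank([Bᵗ − Aᵗ | c]), where c is the n × 1 column vector with all entries 1, and ranks are taken over ℚ. -/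
/-- The generating relation of the `𝒱`-monoid of the Leavitt path algebra of a
finite hypergraph with coefficient matrices `A` (LHS) and `B` (RHS): the `i`-th
relation identifies row `i` of `A` with row `i` of `B`, as elements of the free
abelian monoid `T = Fin n → ℕ` on the vertices. -/
def vRel {h n : ℕ} (A B : Matrix (Fin h) (Fin n) ℕ) (x y : Fin n → ℕ) : Prop :=
  ∃ i : Fin h, x = A i ∧ y = B i

/-- One rewriting move `M_i`: replace an occurrence of the LHS of relation `i`
by its RHS. -/
def vStep {h n : ℕ} (A B : Matrix (Fin h) (Fin n) ℕ) (i : Fin h) (x y : Fin n → ℕ) : Prop :=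
  ∃ z : Fin n → ℕ, x = z + A i ∧ y = z + B i

/-- `Δ_σ`: the result of applying the moves `M_i` in the order given by the
sequence `σ`. -/
inductive Rewrites {h n : ℕ} (A B : Matrix (Fin h) (Fin n) ℕ) :
    List (Fin h) → (Fin n → ℕ) → (Fin n → ℕ) → Prop
  | nil (x : Fin n → ℕ) : Rewrites A B [] x x
  | cons {i : Fin h} {σ : List (Fin h)} {x y z : Fin n → ℕ} :
      vStep A B i x y → Rewrites A B σ y z → Rewrites A B (i :: σ) x z

/-- The confluence condition: `[x] = [y]` in the `𝒱`-monoid iff `x` and `y`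
have a common rewrite `Δ_σ(x) = Δ_{σ'}(y)`. -/
def ConfluenceCondition {h n : ℕ} (A B : Matrix (Fin h) (Fin n) ℕ) : Prop :=
  ∀ x y : Fin n → ℕ, (addConGen (vRel A B)) x y ↔
    ∃ (σ σ' : List (Fin h)) (z : Fin n → ℕ), Rewrites A B σ x z ∧ Rewrites A B σ' y z

/-- `L_K(Ė)` has Invariant Basis Number, expressed via its `𝒱`-monoid:
`m·[Σ_i v_i] = p·[Σ_i v_i]` implies `m = p` for positive integers `m, p`. -/
def IBNCondition {h n : ℕ} (A B : Matrix (Fin h) (Fin n) ℕ) : Prop :=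
  ∀ m p : ℕ, 0 < m → 0 < p →
    (addConGen (vRel A B)) (fun _ => m) (fun _ => p) → m = p

lemma cong_rel {h n : ℕ} (A B : Matrix (Fin h) (Fin n) ℕ) (i : Fin h) :
    addConGen (vRel A B) (A i) (B i) :=
  AddConGen.Rel.of _ _ ⟨i, rfl, rfl⟩

lemma cong_nsmul {h n : ℕ} (A B : Matrix (Fin h) (Fin n) ℕ) (k : ℕ) {a b : Fin n → ℕ}
    (hab : addConGen (vRel A B) a b) : addConGen (vRel A B) (k • a) (k • b) := by
  induction k with
  | zero => simpa using (addConGen (vRel A B)).refl 0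
  | succ k ih =>
    rw [succ_nsmul, succ_nsmul]
    exact (addConGen (vRel A B)).add ih hab

lemma cong_sum {h n : ℕ} (A B : Matrix (Fin h) (Fin n) ℕ) {f g : Fin h → (Fin n → ℕ)}
    (hfg : ∀ i, addConGen (vRel A B) (f i) (g i)) :
    addConGen (vRel A B) (∑ i, f i) (∑ i, g i) := by
  classical
  have key : ∀ s : Finset (Fin h),
      addConGen (vRel A B) (∑ i ∈ s, f i) (∑ i ∈ s, g i) := by
    intro s
    induction s using Finset.induction_on with
    | empty => simpa using (addConGen (vRel A B)).refl 0
    | insert _ _ hnot ih =>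
      rw [Finset.sum_insert hnot, Finset.sum_insert hnot]
      exact (addConGen (vRel A B)).add (hfg _) ih
  exact key Finset.univ

lemma rewrites_sum {h n : ℕ} {A B : Matrix (Fin h) (Fin n) ℕ} {σ : List (Fin h)}
    {x z : Fin n → ℕ} (hr : Rewrites A B σ x z) (j : Fin n) :
    (z j : ℚ) = (x j : ℚ) + (σ.map (fun i => (B i j : ℚ) - A i j)).sum := by
  induction hr with
  | nil => simp
  | cons hstep hrest ih =>
    obtain ⟨w, hx, hy⟩ := hstep
    subst hx; subst hy
    simp only [List.map_cons, List.sum_cons, Pi.add_apply] at ih ⊢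
    push_cast at ih ⊢
    linarith

lemma list_sum_apply' {h n : ℕ} (l : List (Fin h)) (f : Fin h → (Fin n → ℚ)) (j : Fin n) :
    (l.map f).sum j = (l.map (fun i => f i j)).sum := by
  induction l with
  | nil => simp
  | cons a t ih => simp [ih]

/-- Matrix criterion for Invariant Basis Number: for a finite hypergraph with
`h` hyperedge relations and `n` vertices satisfying the confluence condition,
the Leavitt path algebra has IBN iff
`rank(Bᵗ − Aᵗ) < rank([Bᵗ − Aᵗ | c])` over `ℚ`, where `c` is the all-ones
column. -/
theorem hypergraph_IBN_matrix_criterion {h n : ℕ} (A B : Matrix (Fin h) (Fin n) ℕ)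
    (hconf : ConfluenceCondition A B) :
    IBNCondition A B ↔
      ((B.map (Nat.cast : ℕ → ℚ)).transpose - (A.map (Nat.cast : ℕ → ℚ)).transpose).rank <
        (Matrix.fromCols
          ((B.map (Nat.cast : ℕ → ℚ)).transpose - (A.map (Nat.cast : ℕ → ℚ)).transpose)
          (Matrix.of fun (_ : Fin n) (_ : Unit) => (1 : ℚ))).rank := by
  classical
  set M :=
    (B.map (Nat.cast : ℕ → ℚ)).transpose - (A.map (Nat.cast : ℕ → ℚ)).transpose with hM
  set Cm := Matrix.of fun (_ : Fin n) (_ : Unit) => (1 : ℚ) with hCm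
  set c := (fun _ => (1:ℚ) : Fin n → ℚ) with hc
  set col := (fun (i : Fin h) (j : Fin n) => (B i j : ℚ) - (A i j : ℚ)) with hcol
  have hMt : M.transpose = col := by
    funext i j
    simp [hM, hcol, Matrix.transpose_apply, Matrix.sub_apply, Matrix.map_apply]
  have h1 : ∀ i : Fin h, (Matrix.fromCols M Cm).transpose (Sum.inl i) = col i := by
    intro i; rw [← hMt]; rfl
  have h2 : ∀ u : Unit, (Matrix.fromCols M Cm).transpose (Sum.inr u) = c := by
    intro u; rfl
  have hFt : Set.range (Matrix.fromCols M Cm).transpose = insert c (Set.range col) := by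
    ext v
    simp only [Set.mem_range, Set.mem_insert_iff]
    constructor
    · rintro ⟨(i | u), rfl⟩
      · exact Or.inr ⟨i, (h1 i).symm⟩
      · exact Or.inl (h2 u).symm
    · rintro (rfl | ⟨i, rfl⟩)
      · exact ⟨Sum.inr (), h2 ()⟩
      · exact ⟨Sum.inl i, h1 i⟩
  have key : (M.rank < (Matrix.fromCols M Cm).rank) ↔
      c ∉ Submodule.span ℚ (Set.range col) := by
    rw [Matrix.rank_eq_finrank_span_cols, Matrix.rank_eq_finrank_span_cols, Matrix.col, Matrix.col, hMt, hFt]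
    constructor
    · intro hlt hcmem
      rw [Submodule.span_insert_eq_span hcmem] at hlt
      exact lt_irrefl _ hlt
    · intro hcmem
      apply Submodule.finrank_lt_finrank_of_lt
      refine lt_of_le_of_ne (Submodule.span_mono (Set.subset_insert _ _)) ?_
      intro heq
      exact hcmem (heq ▸ Submodule.subset_span (Set.mem_insert _ _))
  rw [key]
  constructor
  · -- IBN → c ∉ span
    intro hibn hcmem
    obtain ⟨q, hq⟩ := (Submodule.mem_span_range_iff_exists_fun ℚ).1 hcmem
    set N := ∏ i, (q i).den with hN
    have hNpos : 0 < N := Finset.prod_pos fun i _ => (q i).pos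
    set g := (fun i : Fin h => (q i).num * ((N / (q i).den : ℕ) : ℤ)) with hg
    have hgq : ∀ i, (g i : ℚ) = q i * N := by
      intro i
      have hdvd : (q i).den ∣ N := Finset.dvd_prod_of_mem _ (Finset.mem_univ i)
      have hd1 : ((q i).den : ℚ) * ((N / (q i).den : ℕ) : ℚ) = (N : ℚ) := by
        exact_mod_cast congrArg (Nat.cast : ℕ → ℚ) (Nat.mul_div_cancel' hdvd)
      have h0 : ((q i).den : ℚ) ≠ 0 := by exact_mod_cast (q i).den_ne_zero
      have hd2 : ((q i).num : ℚ) = q i * (q i).den := (div_eq_iff h0).1 (Rat.num_div_den (q i))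
      calc (g i : ℚ) = ((q i).num : ℚ) * ((N / (q i).den : ℕ) : ℚ) := by
            simp only [hg, Int.cast_mul, Int.cast_natCast]
        _ = q i * (((q i).den : ℚ) * ((N / (q i).den : ℕ) : ℚ)) := by rw [hd2]; ring
        _ = q i * N := by rw [hd1]
    have hqN : ∀ j : Fin n, ∑ i, (g i : ℚ) * ((B i j : ℚ) - (A i j : ℚ)) = (N : ℚ) := by
      intro j
      have := congrFun hq j
      simp only [Finset.sum_apply, Pi.smul_apply, hcol, smul_eq_mul, hc] at this
      calc ∑ i, (g i : ℚ) * ((B i j : ℚ) - (A i j : ℚ))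
          = (N : ℚ) * ∑ i, q i * ((B i j : ℚ) - (A i j : ℚ)) := by
            rw [Finset.mul_sum]; apply Finset.sum_congr rfl; intro i _; rw [hgq i]; ring
        _ = (N : ℚ) := by rw [this]; ring
    have hZ : ∀ j : Fin n, ∑ i, g i * ((B i j : ℤ) - (A i j : ℤ)) = (N : ℤ) := by
      intro j
      have := hqN j
      exact_mod_cast this
    set P := (fun i : Fin h => (g i).toNat) with hP
    set Q := (fun i : Fin h => (-(g i)).toNat) with hQ
    have hPQ : ∀ i, (P i : ℤ) - (Q i : ℤ) = g i := by
      intro i; simp only [hP, hQ]; omega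
    set s := (fun j : Fin n => ∑ i, (P i * A i j + Q i * B i j)) with hs
    set t := (fun j : Fin n => ∑ i, (P i * B i j + Q i * A i j)) with ht
    have hstZ : ∀ j, (t j : ℤ) = (s j : ℤ) + N := by
      intro j
      rw [← hZ j]
      push_cast [hs, ht]
      rw [← Finset.sum_add_distrib]
      apply Finset.sum_congr rfl
      intro i _
      rw [← hPQ i]; ring
    have hst : ∀ j, t j = s j + N := by
      intro j; have := hstZ j; exact_mod_cast this
    set m := (Finset.univ.sup s) + 1 with hm
    have hms : ∀ j, s j < m := fun j =>
      Nat.lt_succ_of_le (Finset.le_sup (Finset.mem_univ j))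
    set y := (fun j : Fin n => m - s j) with hy
    have hbase : addConGen (vRel A B)
        (∑ i, (P i • A i + Q i • B i)) (∑ i, (P i • B i + Q i • A i)) :=
      cong_sum A B fun i =>
        (addConGen (vRel A B)).add (cong_nsmul A B (P i) (cong_rel A B i))
          (cong_nsmul A B (Q i) ((addConGen (vRel A B)).symm (cong_rel A B i)))
    have hall := (addConGen (vRel A B)).add ((addConGen (vRel A B)).refl y) hbase
    have sumL : ∀ j, (∑ i, (P i • A i + Q i • B i)) j = s j := by
      intro j
      rw [Finset.sum_apply]
      simp [hs, smul_eq_mul]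
    have sumR : ∀ j, (∑ i, (P i • B i + Q i • A i)) j = t j := by
      intro j
      rw [Finset.sum_apply]
      simp [ht, smul_eq_mul]
    have eL : y + (∑ i, (P i • A i + Q i • B i)) = (fun _ => m) := by
      funext j
      have := hms j
      simp only [Pi.add_apply, sumL j, hy]
      omega
    have eR : y + (∑ i, (P i • B i + Q i • A i)) = (fun _ => m + N) := by
      funext j
      have h1 := hms j
      have h2 := hst j
      simp only [Pi.add_apply, sumR j, hy]
      omega
    rw [eL, eR] at hall
    have := hibn m (m + N) (by omega) (by omega) hall
    omega
  · -- c ∉ span → IBN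
    intro hcnot m p hmpos hppos hcong
    by_contra hne
    obtain ⟨σ, σ', z, hr1, hr2⟩ := (hconf _ _).1 hcong
    apply hcnot
    have hS1 : (σ.map col).sum ∈ Submodule.span ℚ (Set.range col) :=
      list_sum_mem fun x hx => by
        obtain ⟨i, _, rfl⟩ := List.mem_map.1 hx
        exact Submodule.subset_span ⟨i, rfl⟩
    have hS2 : (σ'.map col).sum ∈ Submodule.span ℚ (Set.range col) :=
      list_sum_mem fun x hx => by
        obtain ⟨i, _, rfl⟩ := List.mem_map.1 hx
        exact Submodule.subset_span ⟨i, rfl⟩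
    have hmp : ((m : ℚ) - p) ≠ 0 := by
      intro hcontra
      apply hne
      have : (m : ℚ) = p := by linarith
      exact_mod_cast this
    have hceq : c = ((m : ℚ) - p)⁻¹ • ((σ'.map col).sum - (σ.map col).sum) := by
      funext j
      have e1 := rewrites_sum hr1 j
      have e2 := rewrites_sum hr2 j
      simp only [Pi.smul_apply, Pi.sub_apply, smul_eq_mul, hc, list_sum_apply']
      have hdiff : (σ'.map (fun i => col i j)).sum - (σ.map (fun i => col i j)).sum
          = (m : ℚ) - p := by
        simp only [hcol] at e1 e2 ⊢
        linarith [e1, e2]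
      rw [hdiff, inv_mul_cancel₀ hmp]
    rw [hceq]
    exact Submodule.smul_mem _ _ (Submodule.sub_mem _ hS2 hS1)
end

section
/- Let Ė be a bi-separated graph. Then the natural K-algebra homomorphism from the path algebra K(E) to the Cohn-Leavitt path algebra 𝒜_K(Ė) is injective. -/
/-- Generators of the Cohn–Leavitt path algebra of a bi-separated graph: the
vertices, the edges, and the ghost edges. -/
inductive CLGen (Vt Ed : Type) : Type
  | vert : Vt → CLGen Vt Ed
  | edge : Ed → CLGen Vt Ed
  | ghost : Ed → CLGen Vt Ed

namespace BSG

variable (K : Type) [Field K] {Vt Ed : Type}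

open Classical

/-- The edge `XY`: the unique element of `X ∩ Y` if it is nonempty, `0`
otherwise, as an element of the free algebra. -/
noncomputable def edgeTerm (X Y : Set Ed) : FreeAlgebra K (CLGen Vt Ed) :=
  if h : (X ∩ Y).Nonempty then FreeAlgebra.ι K (CLGen.edge h.some) else 0

/-- The ghost edge `(YX)^*`. -/
noncomputable def ghostTerm (X Y : Set Ed) : FreeAlgebra K (CLGen Vt Ed) :=
  if h : (X ∩ Y).Nonempty then FreeAlgebra.ι K (CLGen.ghost h.some) else 0

open FreeAlgebra in
/-- The defining relations of the Cohn–Leavitt path algebra `𝒜_K(Ė)` of a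
bi-separated graph: the path algebra relations of the double graph together
with `(𝒜1)` `Σ_{Y ∈ D} (XY)(YX')^* = δ_{XX'} s(X)` for `X, X' ∈ S` and
`(𝒜2)` `Σ_{X ∈ C} (YX)^*(XY') = δ_{YY'} r(Y)` for `Y, Y' ∈ T`. -/
inductive CLRel [Nonempty Vt] (G : BSG Vt Ed) :
    FreeAlgebra K (CLGen Vt Ed) → FreeAlgebra K (CLGen Vt Ed) → Prop
  | vv (v w : Vt) :
      CLRel G (ι K (CLGen.vert v) * ι K (CLGen.vert w))
        (if v = w then ι K (CLGen.vert v) else 0)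
  | se (e : Ed) :
      CLRel G (ι K (CLGen.vert (G.src e)) * ι K (CLGen.edge e)) (ι K (CLGen.edge e))
  | er (e : Ed) :
      CLRel G (ι K (CLGen.edge e) * ι K (CLGen.vert (G.rng e))) (ι K (CLGen.edge e))
  | rg (e : Ed) :
      CLRel G (ι K (CLGen.vert (G.rng e)) * ι K (CLGen.ghost e)) (ι K (CLGen.ghost e))
  | gs (e : Ed) :
      CLRel G (ι K (CLGen.ghost e) * ι K (CLGen.vert (G.src e))) (ι K (CLGen.ghost e))
  | a1 (X X' : Set Ed) (hX : X ∈ G.S) (hX' : X' ∈ G.S) :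
      CLRel G (∑ᶠ Y ∈ G.D, edgeTerm K X Y * ghostTerm K X' Y)
        (if X = X' then ι K (CLGen.vert (G.srcOf X)) else 0)
  | a2 (Y Y' : Set Ed) (hY : Y ∈ G.T) (hY' : Y' ∈ G.T) :
      CLRel G (∑ᶠ X ∈ G.C, ghostTerm K X Y * edgeTerm K X Y')
        (if Y = Y' then ι K (CLGen.vert (G.rngOf Y)) else 0)

/-- The ambient presented algebra of the Cohn–Leavitt path algebra. -/
abbrev CLAmbient [Nonempty Vt] (G : BSG Vt Ed) : Type :=
  RingQuot (CLRel K G)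

/-- The images of the generators. -/
noncomputable def clgen [Nonempty Vt] (G : BSG Vt Ed) (x : CLGen Vt Ed) : CLAmbient K G :=
  RingQuot.mkAlgHom K (CLRel K G) (FreeAlgebra.ι K x)

/-- The Cohn–Leavitt path algebra `𝒜_K(Ė)`, realized as the (non-unital)
subalgebra generated by the vertices, edges and ghost edges. -/
noncomputable def CLPA [Nonempty Vt] (G : BSG Vt Ed) :
    NonUnitalSubalgebra K (CLAmbient K G) :=
  NonUnitalAlgebra.adjoin K (Set.range (clgen K G))

end BSG

namespace BSG

variable (K : Type) [Field K] {Vt Ed : Type}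

open Classical

open FreeAlgebra in
/-- The defining relations of the path algebra `K(E)` of the underlying graph. -/
inductive PRel (G : BSG Vt Ed) :
    FreeAlgebra K (Vt ⊕ Ed) → FreeAlgebra K (Vt ⊕ Ed) → Prop
  | vv (v w : Vt) :
      PRel G (ι K (Sum.inl v) * ι K (Sum.inl w))
        (if v = w then ι K (Sum.inl v) else 0)
  | se (e : Ed) :
      PRel G (ι K (Sum.inl (G.src e)) * ι K (Sum.inr e)) (ι K (Sum.inr e))
  | er (e : Ed) :
      PRel G (ι K (Sum.inr e) * ι K (Sum.inl (G.rng e))) (ι K (Sum.inr e))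

/-- The images of the generators in the presented path algebra of `E`. -/
noncomputable def pgen (G : BSG Vt Ed) (x : Vt ⊕ Ed) : RingQuot (PRel K G) :=
  RingQuot.mkAlgHom K (PRel K G) (FreeAlgebra.ι K x)

/-- The path algebra `K(E)` of the underlying graph, as a non-unital
subalgebra. -/
noncomputable def PAlg (G : BSG Vt Ed) : NonUnitalSubalgebra K (RingQuot (PRel K G)) :=
  NonUnitalAlgebra.adjoin K (Set.range (pgen K G))

end BSG

open BSG

namespace CLWork

open Classical BSG

variable {Vt Ed : Type}

section Graph

variable (G : BSG Vt Ed)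

noncomputable def rowS (e : Ed) : Set Ed := (G.C_cover e).choose

noncomputable def colS (e : Ed) : Set Ed := (G.D_cover e).choose

lemma rowS_inC (e : Ed) : rowS G e ∈ G.C := (G.C_cover e).choose_spec.1

lemma mem_rowS (e : Ed) : e ∈ rowS G e := (G.C_cover e).choose_spec.2

lemma colS_inD (e : Ed) : colS G e ∈ G.D := (G.D_cover e).choose_spec.1

lemma mem_colS (e : Ed) : e ∈ colS G e := (G.D_cover e).choose_spec.2

lemma rowS_eq {X : Set Ed} (hX : X ∈ G.C) {e : Ed} (he : e ∈ X) : rowS G e = X := by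
  by_contra h
  exact (G.C_disj _ (rowS_inC G e) _ hX h).ne_of_mem (mem_rowS G e) he rfl

lemma colS_eq {Y : Set Ed} (hY : Y ∈ G.D) {e : Ed} (he : e ∈ Y) : colS G e = Y := by
  by_contra h
  exact (G.D_disj _ (colS_inD G e) _ hY h).ne_of_mem (mem_colS G e) he rfl

lemma src_eq_of_rowS_eq {e f : Ed} (h : rowS G e = rowS G f) : G.src e = G.src f :=
  G.C_src _ (rowS_inC G e) e (mem_rowS G e) f (h ▸ mem_rowS G f)

lemma rng_eq_of_colS_eq {e f : Ed} (h : colS G e = colS G f) : G.rng e = G.rng f :=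
  G.D_rng _ (colS_inD G e) e (mem_colS G e) f (h ▸ mem_colS G f)

lemma mem_rowS_iff {e f : Ed} : f ∈ rowS G e ↔ rowS G f = rowS G e :=
  ⟨fun h => rowS_eq G (rowS_inC G e) h, fun h => h ▸ mem_rowS G f⟩

lemma mem_colS_iff {e f : Ed} : f ∈ colS G e ↔ colS G f = colS G e :=
  ⟨fun h => colS_eq G (colS_inD G e) h, fun h => h ▸ mem_colS G f⟩

/-- Uniqueness of an edge with given row and column. -/
lemma row_col_unique {e f : Ed} (h1 : rowS G e = rowS G f) (h2 : colS G e = colS G f) :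
    e = f := by
  refine G.CD_inter _ (rowS_inC G e) _ (colS_inD G e) ⟨mem_rowS G e, mem_colS G e⟩
    ⟨h1 ▸ mem_rowS G f, h2 ▸ mem_colS G f⟩

lemma srcOf_eq [Nonempty Vt] {X : Set Ed} (hX : X ∈ G.C) {e : Ed} (he : e ∈ X) :
    G.srcOf X = G.src e := by
  have hne : X.Nonempty := ⟨e, he⟩
  rw [BSG.srcOf, dif_pos hne]
  exact G.C_src _ hX _ hne.some_mem _ he

lemma rngOf_eq [Nonempty Vt] {Y : Set Ed} (hY : Y ∈ G.D) {e : Ed} (he : e ∈ Y) :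
    G.rngOf Y = G.rng e := by
  have hne : Y.Nonempty := ⟨e, he⟩
  rw [BSG.rngOf, dif_pos hne]
  exact G.D_rng _ hY _ hne.some_mem _ he

lemma some_congr {X Y : Set Ed} (h : X = Y) (hX : X.Nonempty) (hY : Y.Nonempty) :
    hX.some = hY.some := by subst h; rfl

/-- distinguished edge of the row of `e` -/
noncomputable def hatR (e : Ed) : Ed := Set.Nonempty.some (⟨e, mem_rowS G e⟩ : (rowS G e).Nonempty)

/-- distinguished edge of the column of `e` -/
noncomputable def hatC (e : Ed) : Ed := Set.Nonempty.some (⟨e, mem_colS G e⟩ : (colS G e).Nonempty)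

lemma hatR_mem (e : Ed) : hatR G e ∈ rowS G e := Set.Nonempty.some_mem _

lemma hatC_mem (e : Ed) : hatC G e ∈ colS G e := Set.Nonempty.some_mem _

lemma hatR_congr {e f : Ed} (h : rowS G e = rowS G f) : hatR G e = hatR G f :=
  some_congr h _ _

lemma hatC_congr {e f : Ed} (h : colS G e = colS G f) : hatC G e = hatC G f :=
  some_congr h _ _

/-- the rows meeting a finite set, as a finset -/
noncomputable def finrow (e : Ed) : Finset Ed :=
  if h : (rowS G e).Finite then h.toFinset else ∅

noncomputable def fincol (e : Ed) : Finset Ed :=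
  if h : (colS G e).Finite then h.toFinset else ∅

lemma mem_finrow {e : Ed} (h : (rowS G e).Finite) {g : Ed} :
    g ∈ finrow G e ↔ g ∈ rowS G e := by
  rw [finrow, dif_pos h]; exact h.mem_toFinset

lemma mem_fincol {e : Ed} (h : (colS G e).Finite) {g : Ed} :
    g ∈ fincol G e ↔ g ∈ colS G e := by
  rw [fincol, dif_pos h]; exact h.mem_toFinset

end Graph

/-! ### Letters of the subdivided double graph -/

inductive L (Vt Ed : Type) : Type
  | vx (v : Vt)
  | mx (e : Ed)
  | a1 (e : Ed)
  | a2 (e : Ed)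
  | g1 (e : Ed)
  | g2 (e : Ed)

namespace L

variable (G : BSG Vt Ed)

/-- source sort of a letter -/
def ls : L Vt Ed → Vt ⊕ Ed
  | vx v => .inl v
  | mx e => .inr e
  | a1 e => .inl (G.src e)
  | a2 e => .inr e
  | g1 e => .inr e
  | g2 e => .inl (G.rng e)

/-- range sort of a letter -/
def lr : L Vt Ed → Vt ⊕ Ed
  | vx v => .inl v
  | mx e => .inr e
  | a1 e => .inr e
  | a2 e => .inl (G.rng e)
  | g1 e => .inl (G.src e)
  | g2 e => .inr e

/-- non-vertex letters -/
def NV : L Vt Ed → Prop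
  | vx _ => False
  | mx _ => False
  | _ => True

lemma ls_inj_vert {u u' : L Vt Ed} (hu : ¬ NV u) (hu' : ¬ NV u')
    (h : ls G u = ls G u') : u = u' := by
  cases u <;> cases u' <;> simp_all [NV, ls]

lemma lr_eq_ls_vert {u : L Vt Ed} (hu : ¬ NV u) : lr G u = ls G u := by
  cases u <;> simp_all [NV, ls, lr]

end L

/-! ### Forbidden pairs and normal words -/

open L

variable (G : BSG Vt Ed)

def Bad : L Vt Ed → L Vt Ed → Prop
  | .a1 e, .g1 f => f = e ∧ rowS G e ∈ G.S ∧ hatR G e = e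
  | .a2 e, .g2 f => colS G e = colS G f
  | .g1 e, .a1 f => rowS G e = rowS G f
  | .g2 e, .a2 f => f = e ∧ colS G e ∈ G.T ∧ hatC G e = e
  | _, _ => False

def Ok (x y : L Vt Ed) : Prop := lr G x = ls G y ∧ ¬ Bad G x y

def NormalW (l : List (L Vt Ed)) : Prop :=
  (∃ u, ¬ NV u ∧ l = [u]) ∨ ((∀ x ∈ l, NV x) ∧ l.Chain' (Ok G))

lemma normalW_nil : NormalW G ([] : List (L Vt Ed)) := Or.inr ⟨by simp, List.isChain_nil⟩

lemma normalW_single (x : L Vt Ed) : NormalW G [x] := by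
  by_cases h : NV x
  · exact Or.inr ⟨by simpa, List.isChain_singleton _⟩
  · exact Or.inl ⟨x, h, rfl⟩

lemma normalW_tail {y : L Vt Ed} {c : List (L Vt Ed)} (h : NormalW G (y :: c)) :
    NormalW G c := by
  rcases h with ⟨u, _, hu⟩ | ⟨hnv, hch⟩
  · cases hu; exact normalW_nil G
  · exact Or.inr ⟨fun x hx => hnv x (List.mem_cons_of_mem _ hx), hch.tail⟩

lemma normalW_cons_iff {y : L Vt Ed} {z : L Vt Ed} {c : List (L Vt Ed)} :
    NormalW G (y :: z :: c) ↔ NV y ∧ Ok G y z ∧ NormalW G (z :: c) ∧ NV z := by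
  constructor
  · rintro (⟨u, _, hu⟩ | ⟨hnv, hch⟩)
    · simp at hu
    · unfold List.Chain' at hch
      rw [List.isChain_cons_cons] at hch
      exact ⟨hnv _ (by simp), hch.1,
        Or.inr ⟨fun x hx => hnv x (List.mem_cons_of_mem _ hx), hch.2⟩, hnv _ (by simp)⟩
  · rintro ⟨h1, h2, (⟨u, hu, hc⟩ | ⟨hnv, hch⟩), h4⟩
    · obtain ⟨rfl, rfl⟩ : z = u ∧ c = [] := by
        constructor <;> [exact (List.cons.injEq ..).mp hc |>.1;
          exact (List.cons.injEq ..).mp hc |>.2]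
      exact absurd h4 hu
    · refine Or.inr ⟨fun x hx => ?_, List.isChain_cons_cons.mpr ⟨h2, hch⟩⟩
      rcases List.mem_cons.mp hx with h | h
      · exact h ▸ h1
      · exact hnv x h

lemma normalW_cons {y z : L Vt Ed} {c : List (L Vt Ed)} (h1 : NV y) (h2 : Ok G y z)
    (h3 : NormalW G (z :: c)) (h4 : NV z) : NormalW G (y :: z :: c) :=
  (normalW_cons_iff G).mpr ⟨h1, h2, h3, h4⟩

end CLWork
namespace CLWork

open Classical L Finsupp

variable {Vt Ed : Type} (K : Type) [Field K] (G : BSG Vt Ed)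

/-- the representation space: free module on words -/
abbrev V (K Vt Ed : Type) [Field K] : Type := (List (L Vt Ed)) →₀ K

/-- basis vector -/
noncomputable def bw (l : List (L Vt Ed)) : V K Vt Ed := Finsupp.single l 1

noncomputable def resV (u : L Vt Ed) : List (L Vt Ed) → V K Vt Ed
  | [] => bw K [u]
  | c => bw K c

@[simp] lemma resV_nil (u : L Vt Ed) : resV K u [] = bw K [u] := rfl

lemma resV_cons (u : L Vt Ed) (z : L Vt Ed) (c : List (L Vt Ed)) :
    resV K u (z :: c) = bw K (z :: c) := rfl

/-- value of the reduction of a two-letter prefix (assumed composable, both non-vertex) -/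
noncomputable def pairVal : L Vt Ed → L Vt Ed → List (L Vt Ed) → V K Vt Ed
  | .a1 e, .g1 f, c =>
      if f = e ∧ rowS G e ∈ G.S ∧ hatR G e = e then
        resV K (.vx (G.src e)) c
          - ∑ g ∈ (finrow G e).erase e, bw K (.a1 g :: .g1 g :: c)
      else bw K (.a1 e :: .g1 f :: c)
  | .a2 e, .g2 f, c =>
      if colS G e = colS G f then (if e = f then resV K (.mx e) c else 0)
      else bw K (.a2 e :: .g2 f :: c)
  | .g1 e, .a1 f, c =>
      if rowS G e = rowS G f then (if e = f then resV K (.mx e) c else 0)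
      else bw K (.g1 e :: .a1 f :: c)
  | .g2 e, .a2 f, c =>
      if f = e ∧ colS G e ∈ G.T ∧ hatC G e = e then
        resV K (.vx (G.rng e)) c
          - ∑ g ∈ (fincol G e).erase e, bw K (.g2 g :: .a2 g :: c)
      else bw K (.g2 e :: .a2 f :: c)
  | x, y, c => bw K (x :: y :: c)

/-- action of a letter on a word, prior to the normality guard -/
noncomputable def actC (x : L Vt Ed) : List (L Vt Ed) → V K Vt Ed
  | [] => bw K [x]
  | y :: c =>
      if NV y then
        (if lr G x = ls G y then
          (if NV x then pairVal K G x y c else bw K (y :: c)) else 0)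
      else (if (NV x ∧ lr G x = ls G y) ∨ x = y then bw K [x] else 0)

/-- action of a letter on a basis word -/
noncomputable def act (x : L Vt Ed) (b : List (L Vt Ed)) : V K Vt Ed :=
  if NormalW G b then actC K G x b else 0

/-- the letter action as an endomorphism -/
noncomputable def op (x : L Vt Ed) : Module.End K (V K Vt Ed) :=
  Finsupp.linearCombination K (act K G x)

@[simp] lemma op_bw (x : L Vt Ed) (b : List (L Vt Ed)) : op K G x (bw K b) = act K G x b := by
  rw [op, bw, linearCombination_single, one_smul]

lemma act_junk (x : L Vt Ed) {b : List (L Vt Ed)} (h : ¬ NormalW G b) :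
    act K G x b = 0 := if_neg h

lemma act_of_normal (x : L Vt Ed) {b : List (L Vt Ed)} (h : NormalW G b) :
    act K G x b = actC K G x b := if_pos h

@[simp] lemma act_nil (x : L Vt Ed) : act K G x [] = bw K [x] := by
  rw [act_of_normal K G x (normalW_nil G)]; rfl

lemma actC_cons (x y : L Vt Ed) (c : List (L Vt Ed)) :
    actC K G x (y :: c) =
      if NV y then
        (if lr G x = ls G y then
          (if NV x then pairVal K G x y c else bw K (y :: c)) else 0)
      else (if (NV x ∧ lr G x = ls G y) ∨ x = y then bw K [x] else 0) := rfl

/-- action on a singleton vertex word -/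
lemma act_vert_word (x : L Vt Ed) {u : L Vt Ed} (hu : ¬ NV u) :
    act K G x [u] = if (NV x ∧ lr G x = ls G u) ∨ x = u then bw K [x] else 0 := by
  rw [act_of_normal K G x (normalW_single G u), actC_cons, if_neg hu]

/-- head mismatch gives zero -/
lemma act_head_zero (x : L Vt Ed) {y : L Vt Ed} {c : List (L Vt Ed)}
    (h : lr G x ≠ ls G y) : act K G x (y :: c) = 0 := by
  by_cases hn : NormalW G (y :: c)
  · rw [act_of_normal K G x hn, actC_cons]
    by_cases hy : NV y
    · rw [if_pos hy, if_neg h]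
    · rw [if_neg hy, if_neg]
      rintro (⟨_, h'⟩ | rfl)
      · exact h h'
      · exact h (lr_eq_ls_vert G hy)
  · exact act_junk K G x hn

/-- action of a letter on a normal word with non-vertex composable head, non-bad -/
lemma act_cons_ok (x : L Vt Ed) {y : L Vt Ed} {c : List (L Vt Ed)}
    (hn : NormalW G (y :: c)) (hy : NV y) (hx : NV x) (hcomp : lr G x = ls G y)
    (hbad : ¬ Bad G x y) :
    act K G x (y :: c) = bw K (x :: y :: c) := by
  rw [act_of_normal K G x hn, actC_cons, if_pos hy, if_pos hcomp, if_pos hx]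
  rcases x with v | e | e | e | e | e <;> rcases y with w | f | f | f | f | f <;>
    simp_all [NV, Bad, pairVal, lr, ls]

/-- absorption of a vertex letter into a non-vertex-headed word -/
lemma act_vert_head (u : L Vt Ed) (hu : ¬ NV u) {y : L Vt Ed} {c : List (L Vt Ed)}
    (hy : NV y) (hn : NormalW G (y :: c)) :
    act K G u (y :: c) = if ls G u = ls G y then bw K (y :: c) else 0 := by
  rw [act_of_normal K G u hn, actC_cons, if_pos hy, lr_eq_ls_vert G hu, if_neg hu]

end CLWork
namespace CLWork

open Classical L Finsupp

variable {Vt Ed : Type} (K : Type) [Field K] (G : BSG Vt Ed)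

lemma normalW_vert_head {y : L Vt Ed} {c : List (L Vt Ed)} (hn : NormalW G (y :: c))
    (hy : ¬ NV y) : c = [] := by
  rcases hn with ⟨u, _, hu⟩ | ⟨hnv, _⟩
  · simpa using congrArg List.tail hu
  · exact absurd (hnv y (by simp)) hy

/-- every word in the support is normal, nonempty, with head source `ξ` -/
def GoodOut (ξ : Vt ⊕ Ed) (v : V K Vt Ed) : Prop :=
  ∀ w ∈ v.support, NormalW G w ∧ ∃ y c, w = y :: c ∧ ls G y = ξ

lemma goodOut_zero (ξ : Vt ⊕ Ed) : GoodOut K G ξ (0 : V K Vt Ed) := by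
  intro w hw; simp at hw

lemma goodOut_bw {ξ : Vt ⊕ Ed} {y : L Vt Ed} {c : List (L Vt Ed)}
    (h1 : NormalW G (y :: c)) (h2 : ls G y = ξ) : GoodOut K G ξ (bw K (y :: c)) := by
  intro w hw
  rw [bw, Finsupp.support_single_ne_zero _ one_ne_zero] at hw
  simp at hw
  subst hw
  exact ⟨h1, y, c, rfl, h2⟩

lemma goodOut_sub {ξ : Vt ⊕ Ed} {v₁ v₂ : V K Vt Ed} (h1 : GoodOut K G ξ v₁)
    (h2 : GoodOut K G ξ v₂) : GoodOut K G ξ (v₁ - v₂) := by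
  intro w hw
  have := Finsupp.support_sub (f := v₁) (g := v₂) hw
  rcases Finset.mem_union.mp this with h | h
  · exact h1 w h
  · exact h2 w h

lemma goodOut_sum {ξ : Vt ⊕ Ed} {α : Type} {s : Finset α} {f : α → V K Vt Ed}
    (h : ∀ a ∈ s, GoodOut K G ξ (f a)) : GoodOut K G ξ (∑ a ∈ s, f a) := by
  classical
  induction s using Finset.induction with
  | empty => simpa using goodOut_zero K G ξ
  | insert a s hni ih =>
    rw [Finset.sum_insert hni]
    intro w hw
    rcases Finset.mem_union.mp (Finsupp.support_add hw) with hh | hh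
    · exact h a (by simp) w hh
    · exact ih (fun b hb => h b (by simp [hb])) w hh

lemma goodOut_resV {ξ : Vt ⊕ Ed} {u : L Vt Ed} {c : List (L Vt Ed)}
    (hu : ¬ NV u) (hls : ls G u = ξ)
    (hc : NormalW G c) (hch : ∀ z c', c = z :: c' → ls G z = ξ ∧ NV z) :
    GoodOut K G ξ (resV K u c) := by
  cases c with
  | nil => exact goodOut_bw K G (normalW_single G u) hls
  | cons z c' =>
    rw [resV_cons]
    exact goodOut_bw K G hc (hch z c' rfl).1

/-- the key structural lemma: outputs of the action are normal words with correct source -/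
lemma act_goodOut (x : L Vt Ed) (b : List (L Vt Ed)) :
    GoodOut K G (ls G x) (act K G x b) := by
  by_cases hn : NormalW G b
  swap
  · rw [act_junk K G x hn]; exact goodOut_zero K G _
  cases b with
  | nil => rw [act_nil]; exact goodOut_bw K G (normalW_single G x) rfl
  | cons y c =>
    rw [act_of_normal K G x hn, actC_cons]
    by_cases hy : NV y
    swap
    · rw [if_neg hy]
      split
      · exact goodOut_bw K G (normalW_single G x) rfl
      · exact goodOut_zero K G _
    rw [if_pos hy]
    by_cases hcomp : lr G x = ls G y
    swap
    · rw [if_neg hcomp]; exact goodOut_zero K G _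
    rw [if_pos hcomp]
    by_cases hx : NV x
    swap
    · rw [if_neg hx]
      exact goodOut_bw K G hn (by rw [← hcomp, lr_eq_ls_vert G hx])
    rw [if_pos hx]
    -- now x, y both non-vertex, composable; analyze pairVal
    have hcons : ¬ Bad G x y → GoodOut K G (ls G x) (bw K (x :: y :: c)) := fun hb =>
      goodOut_bw K G (normalW_cons G hx ⟨hcomp, hb⟩ hn hy) rfl
    have htail : NormalW G c := normalW_tail G hn
    -- chain information about `c`
    have hchain : ∀ z c', c = z :: c' → Ok G y z ∧ NV z := by
      intro z c' hc
      subst hc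
      exact ⟨((normalW_cons_iff G).mp hn).2.1, ((normalW_cons_iff G).mp hn).2.2.2⟩
    rcases x with v | e | e | e | e | e <;> rcases y with w | f | f | f | f | f <;>
        simp only [NV] at hx hy <;>
        try { exact hcons (by simp [Bad]) }
    -- remaining: (a1 e, g1 f), (a2 e, g2 f), (g1 e, a1 f), (g2 e, a2 f)
    · -- a1 e, g1 f
      by_cases hb : f = e ∧ rowS G e ∈ G.S ∧ hatR G e = e
      swap
      · rw [pairVal, if_neg hb]; exact hcons (by simpa [Bad] using hb)
      obtain ⟨rfl, hS, hhat⟩ := hb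
      rw [pairVal, if_pos ⟨rfl, hS, hhat⟩]
      refine goodOut_sub K G ?_ (goodOut_sum K G ?_)
      · refine goodOut_resV K G (by simp [NV]) rfl htail ?_
        intro z c' hc
        have h2 := (hchain z c' hc).1
        have h3 := (hchain z c' hc).2
        refine ⟨?_, h3⟩
        rw [← h2.1]; rfl
      · intro g hg
        have hfin : (rowS G f).Finite := G.S_fin _ hS
        rw [Finset.mem_erase, mem_finrow G hfin] at hg
        obtain ⟨hgf, hgrow⟩ := hg
        have hrowseq : rowS G g = rowS G f := (mem_rowS_iff G).mp hgrow
        have hsrc : G.src g = G.src f := src_eq_of_rowS_eq G hrowseq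
        refine goodOut_bw K G ?_ (by simp [ls, hsrc])
        refine normalW_cons G (by simp [NV]) ⟨rfl, ?_⟩ ?_ (by simp [NV])
        · simp only [Bad]
          rintro ⟨-, -, hhg⟩
          exact hgf (hhg.symm.trans ((hatR_congr G hrowseq).trans hhat))
        · -- g1 g :: c is normal
          cases c with
          | nil => exact normalW_single G _
          | cons z c' =>
            have h2 := (hchain z c' rfl).1
            have h3 := (hchain z c' rfl).2
            refine normalW_cons G (by simp [NV]) ⟨?_, ?_⟩ htail h3
            · rw [← h2.1]; simp [lr, hsrc]
            · intro hbad
              refine h2.2 ?_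
              cases z with
              | a1 h' =>
                simp only [Bad] at hbad ⊢
                rw [← hrowseq]; exact hbad
              | vx v => simp [Bad] at hbad
              | mx e => simp [Bad] at hbad
              | a2 e => simp [Bad] at hbad
              | g1 e => simp [Bad] at hbad
              | g2 e => simp [Bad] at hbad
    · -- a2 e, g2 f
      by_cases hb : colS G e = colS G f
      swap
      · rw [pairVal, if_neg hb]; exact hcons (by simpa [Bad] using hb)
      rw [pairVal, if_pos hb]
      by_cases hef : e = f
      swap
      · rw [if_neg hef]; exact goodOut_zero K G _
      rw [if_pos hef]
      refine goodOut_resV K G (by simp [NV]) rfl htail ?_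
      intro z c' hc
      have h2 := (hchain z c' hc).1
      have h3 := (hchain z c' hc).2
      exact ⟨by rw [← h2.1]; simp [lr, ls, hef], h3⟩
    · -- g1 e, a1 f
      by_cases hb : rowS G e = rowS G f
      swap
      · rw [pairVal, if_neg hb]; exact hcons (by simpa [Bad] using hb)
      rw [pairVal, if_pos hb]
      by_cases hef : e = f
      swap
      · rw [if_neg hef]; exact goodOut_zero K G _
      rw [if_pos hef]
      refine goodOut_resV K G (by simp [NV]) rfl htail ?_
      intro z c' hc
      have h2 := (hchain z c' hc).1
      have h3 := (hchain z c' hc).2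
      exact ⟨by rw [← h2.1]; simp [lr, ls, hef], h3⟩
    · -- g2 e, a2 f
      by_cases hb : f = e ∧ colS G e ∈ G.T ∧ hatC G e = e
      swap
      · rw [pairVal, if_neg hb]; exact hcons (by simpa [Bad] using hb)
      obtain ⟨rfl, hT, hhat⟩ := hb
      rw [pairVal, if_pos ⟨rfl, hT, hhat⟩]
      refine goodOut_sub K G ?_ (goodOut_sum K G ?_)
      · refine goodOut_resV K G (by simp [NV]) rfl htail ?_
        intro z c' hc
        have h2 := (hchain z c' hc).1
        have h3 := (hchain z c' hc).2
        refine ⟨?_, h3⟩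
        rw [← h2.1]; rfl
      · intro g hg
        have hfin : (colS G f).Finite := G.T_fin _ hT
        rw [Finset.mem_erase, mem_fincol G hfin] at hg
        obtain ⟨hgf, hgcol⟩ := hg
        have hcolseq : colS G g = colS G f := (mem_colS_iff G).mp hgcol
        have hrng : G.rng g = G.rng f := rng_eq_of_colS_eq G hcolseq
        refine goodOut_bw K G ?_ (by simp [ls, hrng])
        refine normalW_cons G (by simp [NV]) ⟨rfl, ?_⟩ ?_ (by simp [NV])
        · simp only [Bad]
          rintro ⟨-, -, hhg⟩
          exact hgf (hhg.symm.trans ((hatC_congr G hcolseq).trans hhat))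
        · cases c with
          | nil => exact normalW_single G _
          | cons z c' =>
            have h2 := (hchain z c' rfl).1
            have h3 := (hchain z c' rfl).2
            refine normalW_cons G (by simp [NV]) ⟨?_, ?_⟩ htail h3
            · rw [← h2.1]; simp [lr, hrng]
            · intro hbad
              refine h2.2 ?_
              cases z with
              | g2 h' =>
                simp only [Bad] at hbad ⊢
                rw [← hcolseq]; exact hbad
              | vx v => simp [Bad] at hbad
              | mx e => simp [Bad] at hbad
              | a2 e => simp [Bad] at hbad
              | g1 e => simp [Bad] at hbad
              | a1 e => simp [Bad] at hbad

end CLWork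
namespace CLWork

open Classical L Finsupp

variable {Vt Ed : Type} (K : Type) [Field K] (G : BSG Vt Ed)

lemma single_eq_smul_bw (b : List (L Vt Ed)) (k : K) :
    (Finsupp.single b k : V K Vt Ed) = k • bw K b := by
  rw [bw, Finsupp.smul_single, smul_eq_mul, mul_one]

lemma end_ext {φ ψ : Module.End K (V K Vt Ed)} (h : ∀ b, φ (bw K b) = ψ (bw K b)) :
    φ = ψ := by
  apply Finsupp.lhom_ext
  intro b k
  rw [single_eq_smul_bw, map_smul, map_smul, h]

lemma sum_smul_bw (v : V K Vt Ed) : (v.sum fun w k => k • bw K w) = v := by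
  have : (v.sum fun w k => k • bw K w) = v.sum Finsupp.single := by
    apply Finsupp.sum_congr
    intro w _
    rw [bw, Finsupp.smul_single, smul_eq_mul, mul_one]
  rw [this, Finsupp.sum_single]

/-- a vertex letter acts on good outputs as a projection -/
lemma op_vert_goodOut {u : L Vt Ed} (hu : ¬ NV u) {ξ : Vt ⊕ Ed} {v : V K Vt Ed}
    (hgo : GoodOut K G ξ v) : op K G u v = if ls G u = ξ then v else 0 := by
  have key : ∀ w ∈ v.support, act K G u w = if ls G u = ξ then bw K w else 0 := by
    intro w hw
    obtain ⟨hnw, y, c, rfl, hy⟩ := hgo w hw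
    by_cases hyv : NV y
    · rw [act_vert_head K G u hu hyv hnw, hy]
    · have hc : c = [] := normalW_vert_head G hnw hyv
      subst hc
      rw [act_vert_word K G u hyv]
      by_cases h : ls G u = ξ
      · rw [if_pos h, if_pos, bw]
        · congr 2
          exact ls_inj_vert G hu hyv (h.trans hy.symm)
        · exact Or.inr (ls_inj_vert G hu hyv (h.trans hy.symm))
      · rw [if_neg h, if_neg]
        rintro (⟨hnv, -⟩ | rfl)
        · exact hu hnv
        · exact h hy
  rw [op, Finsupp.linearCombination_apply]
  by_cases h : ls G u = ξ
  · rw [if_pos h]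
    calc v.sum (fun w k => k • act K G u w) = v.sum (fun w k => k • bw K w) := by
          apply Finsupp.sum_congr
          intro w hw
          rw [key w hw, if_pos h]
      _ = v := sum_smul_bw K v
  · rw [if_neg h]
    calc v.sum (fun w k => k • act K G u w) = v.sum (fun _ _ => (0 : V K Vt Ed)) := by
          apply Finsupp.sum_congr
          intro w hw
          rw [key w hw, if_neg h, smul_zero]
      _ = 0 := Finset.sum_const_zero

lemma op_vert_act {u : L Vt Ed} (hu : ¬ NV u) (x : L Vt Ed) (b : List (L Vt Ed)) :
    op K G u (act K G x b) = if ls G u = ls G x then act K G x b else 0 :=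
  op_vert_goodOut K G hu (act_goodOut K G x b)

/-- left absorption at the End level -/
lemma op_vert_mul {u : L Vt Ed} (hu : ¬ NV u) (x : L Vt Ed) :
    op K G u * op K G x = if ls G u = ls G x then op K G x else 0 := by
  apply end_ext
  intro b
  rw [Module.End.mul_apply, op_bw, op_vert_act K G hu]
  by_cases h : ls G u = ls G x
  · rw [if_pos h, if_pos h, op_bw]
  · rw [if_neg h, if_neg h, LinearMap.zero_apply]

/-- right absorption, pointwise -/
lemma act_op_vert {u : L Vt Ed} (hu : ¬ NV u) (x : L Vt Ed) (b : List (L Vt Ed)) :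
    op K G x (act K G u b) = if lr G x = ls G u then act K G x b else 0 := by
  by_cases hn : NormalW G b
  swap
  · rw [act_junk K G u hn, act_junk K G x hn, map_zero]
    split <;> rfl
  cases b with
  | nil =>
    rw [act_nil, op_bw, act_vert_word K G x hu]
    by_cases hx : NV x
    · by_cases h : lr G x = ls G u
      · rw [if_pos (Or.inl ⟨hx, h⟩), if_pos h, act_nil]
      · rw [if_neg, if_neg h]
        rintro (⟨-, h'⟩ | rfl)
        · exact h h'
        · exact hu hx
    · by_cases h : x = u
      · subst h
        rw [if_pos (Or.inr rfl), if_pos (lr_eq_ls_vert G hx), act_nil]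
      · rw [if_neg, if_neg]
        · rw [lr_eq_ls_vert G hx]
          intro h'
          exact h (ls_inj_vert G hx hu h')
        · rintro (⟨hnv, -⟩ | rfl)
          · exact hx hnv
          · exact h rfl
  | cons y c =>
    by_cases hyv : NV y
    · rw [act_vert_head K G u hu hyv hn]
      by_cases h : ls G u = ls G y
      · rw [if_pos h, op_bw]
        by_cases hcomp : lr G x = ls G u
        · rw [if_pos hcomp]
        · rw [if_neg hcomp, act_head_zero K G x (fun hh => hcomp (hh.trans h.symm))]
      · rw [if_neg h, map_zero]
        by_cases hcomp : lr G x = ls G u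
        · rw [if_pos hcomp, act_head_zero K G x (fun hh => h (hcomp.symm.trans hh))]
        · rw [if_neg hcomp]
    · have hc : c = [] := normalW_vert_head G hn hyv
      subst hc
      rw [act_vert_word K G u hyv]
      have hucond : ((NV u ∧ lr G u = ls G y) ∨ u = y) ↔ u = y := by
        constructor
        · rintro (⟨hnv, -⟩ | rfl)
          · exact absurd hnv hu
          · rfl
        · exact Or.inr
      by_cases h : u = y
      · rw [if_pos (hucond.mpr h), op_bw]
        subst h
        rw [act_vert_word K G x hu]
        have himp : ((NV x ∧ lr G x = ls G u) ∨ x = u) → lr G x = ls G u := by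
          rintro (⟨-, h'⟩ | rfl)
          · exact h'
          · exact lr_eq_ls_vert G hu
        by_cases h2 : lr G x = ls G u
        · rw [if_pos h2]
        · rw [if_neg (fun hh => h2 (himp hh)), if_neg h2]
      · rw [if_neg (fun hh => h (hucond.mp hh)), map_zero]
        by_cases h2 : lr G x = ls G u
        · rw [if_pos h2, act_vert_word K G x hyv, if_neg]
          rintro (⟨-, h3⟩ | rfl)
          · exact h (ls_inj_vert G hu hyv (h2.symm.trans h3))
          · exact h (ls_inj_vert G hu hyv (h2.symm.trans (lr_eq_ls_vert G hyv)))
        · rw [if_neg h2]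

/-- right absorption at the End level -/
lemma mul_op_vert {u : L Vt Ed} (hu : ¬ NV u) (x : L Vt Ed) :
    op K G x * op K G u = if lr G x = ls G u then op K G x else 0 := by
  apply end_ext
  intro b
  rw [Module.End.mul_apply, op_bw, act_op_vert K G hu]
  by_cases h : lr G x = ls G u
  · rw [if_pos h, if_pos h, op_bw]
  · rw [if_neg h, if_neg h, LinearMap.zero_apply]

end CLWork
namespace CLWork

open Classical L Finsupp

variable {Vt Ed : Type} (K : Type) [Field K] (G : BSG Vt Ed)

lemma act_cons_pair {x y : L Vt Ed} {c : List (L Vt Ed)} (hn : NormalW G (y :: c))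
    (hy : NV y) (hx : NV x) (hcomp : lr G x = ls G y) :
    act K G x (y :: c) = pairVal K G x y c := by
  rw [act_of_normal K G x hn, actC_cons, if_pos hy, if_pos hcomp, if_pos hx]

lemma ok_of_normal {y z : L Vt Ed} {c : List (L Vt Ed)} (hn : NormalW G (y :: z :: c)) :
    Ok G y z ∧ NV z ∧ NV y :=
  ⟨((normalW_cons_iff G).mp hn).2.1, ((normalW_cons_iff G).mp hn).2.2.2,
    ((normalW_cons_iff G).mp hn).1⟩

-- pairVal equations
lemma pairVal_g2_g1 (e f : Ed) (c : List (L Vt Ed)) :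
    pairVal K G (.g2 e) (.g1 f) c = bw K (.g2 e :: .g1 f :: c) := rfl

lemma pairVal_a1_a2 (e f : Ed) (c : List (L Vt Ed)) :
    pairVal K G (.a1 e) (.a2 f) c = bw K (.a1 e :: .a2 f :: c) := rfl

lemma pairVal_a2_a1 (e f : Ed) (c : List (L Vt Ed)) :
    pairVal K G (.a2 e) (.a1 f) c = bw K (.a2 e :: .a1 f :: c) := rfl

lemma pairVal_g1_g2 (e f : Ed) (c : List (L Vt Ed)) :
    pairVal K G (.g1 e) (.g2 f) c = bw K (.g1 e :: .g2 f :: c) := rfl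

lemma pairVal_a2_g2 (e f : Ed) (c : List (L Vt Ed)) :
    pairVal K G (.a2 e) (.g2 f) c =
      if colS G e = colS G f then (if e = f then resV K (.mx e) c else 0)
      else bw K (.a2 e :: .g2 f :: c) := rfl

lemma pairVal_g1_a1 (e f : Ed) (c : List (L Vt Ed)) :
    pairVal K G (.g1 e) (.a1 f) c =
      if rowS G e = rowS G f then (if e = f then resV K (.mx e) c else 0)
      else bw K (.g1 e :: .a1 f :: c) := rfl

lemma pairVal_a1_g1 (e f : Ed) (c : List (L Vt Ed)) :
    pairVal K G (.a1 e) (.g1 f) c =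
      if f = e ∧ rowS G e ∈ G.S ∧ hatR G e = e then
        resV K (.vx (G.src e)) c
          - ∑ g ∈ (finrow G e).erase e, bw K (.a1 g :: .g1 g :: c)
      else bw K (.a1 e :: .g1 f :: c) := rfl

lemma pairVal_g2_a2 (e f : Ed) (c : List (L Vt Ed)) :
    pairVal K G (.g2 e) (.a2 f) c =
      if f = e ∧ colS G e ∈ G.T ∧ hatC G e = e then
        resV K (.vx (G.rng e)) c
          - ∑ g ∈ (fincol G e).erase e, bw K (.g2 g :: .a2 g :: c)
      else bw K (.g2 e :: .a2 f :: c) := rfl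

/-- R-d : `e₂ · f₂* = δ_{ef} m_e` -/
lemma opRd {e f : Ed} (hcol : colS G e = colS G f) :
    op K G (.a2 e) * op K G (.g2 f) = if e = f then op K G (.mx e) else 0 := by
  have hrng : G.rng e = G.rng f := rng_eq_of_colS_eq G hcol
  have hcomp : lr G (.a2 e : L Vt Ed) = ls G (.g2 f : L Vt Ed) := by simp [lr, ls, hrng]
  apply end_ext
  intro b
  rw [Module.End.mul_apply, op_bw]
  have RHS : (if e = f then op K G (.mx e) else 0) (bw K b)
      = if e = f then act K G (.mx e) b else 0 := by
    split
    · rw [op_bw]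
    · rw [LinearMap.zero_apply]
  rw [RHS]
  by_cases hn : NormalW G b
  swap
  · rw [act_junk K G _ hn, map_zero, act_junk K G _ hn]
    split <;> rfl
  cases b with
  | nil =>
    rw [act_nil, op_bw,
      act_cons_pair K G (normalW_single G _) (by simp [NV]) (by simp [NV]) hcomp,
      pairVal_a2_g2, if_pos hcol, act_nil]
    split <;> rfl
  | cons y c =>
    by_cases hyv : NV y
    swap
    · have hc : c = [] := normalW_vert_head G hn hyv
      subst hc
      rw [act_vert_word K G _ hyv]
      have hcond : ((NV (.g2 f : L Vt Ed) ∧ lr G (.g2 f : L Vt Ed) = ls G y)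
          ∨ (.g2 f : L Vt Ed) = y) ↔ lr G (.g2 f : L Vt Ed) = ls G y := by
        constructor
        · rintro (⟨-, h⟩ | rfl)
          · exact h
          · exact absurd (by simp [NV] : NV (.g2 f : L Vt Ed)) hyv
        · exact fun h => Or.inl ⟨by simp [NV], h⟩
      by_cases h : lr G (.g2 f : L Vt Ed) = ls G y
      · rw [if_pos (hcond.mpr h), op_bw,
          act_cons_pair K G (normalW_single G _) (by simp [NV]) (by simp [NV]) hcomp,
          pairVal_a2_g2, if_pos hcol]
        by_cases hef : e = f
        · subst hef
          have huy : (.mx e : L Vt Ed) = y :=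
            ls_inj_vert G (by simp [NV]) hyv (by rw [← h]; rfl)
          rw [if_pos rfl, resV_nil, if_pos rfl, act_vert_word K G _ hyv,
            if_pos (Or.inr huy)]
        · rw [if_neg hef, if_neg hef]
      · rw [if_neg (fun hh => h (hcond.mp hh)), map_zero]
        by_cases hef : e = f
        · subst hef
          rw [if_pos rfl, act_vert_word K G _ hyv, if_neg]
          rintro (⟨h2, -⟩ | huy)
          · exact (by simp [NV] : ¬ NV (.mx e : L Vt Ed)) h2
          · exact h (by rw [← huy]; rfl)
        · rw [if_neg hef]
    -- y non-vertex
    by_cases hcomp2 : lr G (.g2 f : L Vt Ed) = ls G y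
    swap
    · rw [act_head_zero K G _ hcomp2, map_zero]
      by_cases hef : e = f
      · rw [if_pos hef, act_vert_head K G _ (by simp [NV]) hyv hn, if_neg]
        subst hef
        intro hh
        exact hcomp2 (by rw [← hh]; simp [lr, ls])
      · rw [if_neg hef]
    -- ls y = inr f : y = a2 f or g1 f
    have hls2 : ls G y = Sum.inr f := hcomp2.symm
    have hyf : y = .a2 f ∨ y = .g1 f := by
      rcases y with v | d | d | d | d | d
      · exact absurd hyv (by simp [NV])
      · exact absurd hyv (by simp [NV])
      · exact absurd hls2 (by simp [ls])
      · simp only [ls, Sum.inr.injEq] at hls2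
        exact Or.inl (by rw [hls2])
      · simp only [ls, Sum.inr.injEq] at hls2
        exact Or.inr (by rw [hls2])
      · exact absurd hls2 (by simp [ls])
    have habs : e = f → act K G (.mx e) (y :: c) = bw K (y :: c) := by
      intro hef
      rw [act_vert_head K G _ (by simp [NV]) hyv hn, if_pos]
      subst hef
      rcases hyf with rfl | rfl <;> simp [ls]
    rcases hyf with rfl | rfl
    swap
    · -- y = g1 f
      rw [act_cons_pair K G hn hyv (by simp [NV]) hcomp2, pairVal_g2_g1, op_bw]
      have hn2 : NormalW G (.g2 f :: .g1 f :: c) :=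
        normalW_cons G (by simp [NV]) ⟨rfl, by simp [Bad]⟩ hn (by simp [NV])
      rw [act_cons_pair K G hn2 (by simp [NV]) (by simp [NV]) hcomp,
        pairVal_a2_g2, if_pos hcol]
      by_cases hef : e = f
      · rw [if_pos hef, if_pos hef, resV_cons, habs hef]
      · rw [if_neg hef, if_neg hef]
    · -- y = a2 f
      by_cases hb4 : (f : Ed) = f ∧ colS G f ∈ G.T ∧ hatC G f = f
      swap
      · rw [act_cons_pair K G hn hyv (by simp [NV]) hcomp2, pairVal_g2_a2, if_neg hb4,
          op_bw]
        have hn2 : NormalW G (.g2 f :: .a2 f :: c) :=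
          normalW_cons G (by simp [NV]) ⟨hcomp2, by simpa [Bad] using hb4⟩ hn (by simp [NV])
        rw [act_cons_pair K G hn2 (by simp [NV]) (by simp [NV]) hcomp,
          pairVal_a2_g2, if_pos hcol]
        by_cases hef : e = f
        · rw [if_pos hef, if_pos hef, resV_cons, habs hef]
        · rw [if_neg hef, if_neg hef]
      · obtain ⟨-, hT, hhat⟩ := hb4
        have hfin : (colS G f).Finite := G.T_fin _ hT
        rw [act_cons_pair K G hn hyv (by simp [NV]) hcomp2, pairVal_g2_a2,
          if_pos ⟨rfl, hT, hhat⟩, map_sub, map_sum]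
        -- the sum part
        have hsum : ∀ g ∈ (fincol G f).erase f,
            op K G (.a2 e) (bw K (.g2 g :: .a2 g :: c))
              = if e = g then bw K (.a2 e :: c) else 0 := by
          intro g hg
          rw [Finset.mem_erase, mem_fincol G hfin] at hg
          obtain ⟨hgf, hgcol⟩ := hg
          have hcolg : colS G g = colS G f := (mem_colS_iff G).mp hgcol
          have hrngg : G.rng g = G.rng f := rng_eq_of_colS_eq G hcolg
          have hokg : Ok G (.g2 g) (.a2 g) := by
            refine ⟨rfl, ?_⟩
            simp only [Bad]
            rintro ⟨-, -, hhg⟩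
            exact hgf (hhg.symm.trans ((hatC_congr G hcolg).trans hhat))
          have hnz : NormalW G (.a2 g :: c) := by
            cases c with
            | nil => exact normalW_single G _
            | cons z c₂ =>
              obtain ⟨hok, hz, -⟩ := ok_of_normal G hn
              refine normalW_cons G (by simp [NV]) ⟨?_, ?_⟩ (normalW_tail G hn) hz
              · rw [← hok.1]; simp [lr, hrngg]
              · intro hbad
                refine hok.2 ?_
                cases z with
                | g2 h' => simp only [Bad] at hbad ⊢; rw [← hcolg]; exact hbad
                | vx v => simp [Bad] at hbad
                | mx d => simp [Bad] at hbad
                | a1 d => simp [Bad] at hbad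
                | a2 d => simp [Bad] at hbad
                | g1 d => simp [Bad] at hbad
          have hn3 : NormalW G (.g2 g :: .a2 g :: c) :=
            normalW_cons G (by simp [NV]) hokg hnz (by simp [NV])
          rw [op_bw, act_cons_pair K G hn3 (by simp [NV]) (by simp [NV])
              (by simp [lr, ls, hrng, hrngg]), pairVal_a2_g2,
            if_pos (hcol.trans hcolg.symm)]
          by_cases hef : e = g
          · subst hef
            rw [if_pos rfl, if_pos rfl, resV_cons]
          · rw [if_neg hef, if_neg hef]
        rw [Finset.sum_congr rfl hsum]
        have hsum2 : (∑ g ∈ (fincol G f).erase f,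
            if e = g then bw K (.a2 e :: c) else 0)
              = if e = f then 0 else bw K (.a2 e :: c) := by
          by_cases hef : e = f
          · rw [if_pos hef]
            apply Finset.sum_eq_zero
            intro g hg
            rw [if_neg]
            rintro rfl
            exact (Finset.mem_erase.mp hg).1 hef
          · rw [if_neg hef, Finset.sum_eq_single e]
            · rw [if_pos rfl]
            · intro g _ hge
              rw [if_neg (fun h => hge h.symm)]
            · intro hne
              exfalso
              apply hne
              rw [Finset.mem_erase, mem_fincol G hfin]
              exact ⟨hef, hcol ▸ mem_colS G e⟩
        rw [hsum2]
        -- the res part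
        have hres : op K G (.a2 e) (resV K (.vx (G.rng f)) c) = bw K (.a2 e :: c) := by
          cases c with
          | nil =>
            rw [resV_nil, op_bw, act_vert_word K G _ (by simp [NV]), if_pos]
            exact Or.inl ⟨by simp [NV], by simp [lr, ls, hrng]⟩
          | cons z c₂ =>
            rw [resV_cons, op_bw]
            obtain ⟨hok, hz, -⟩ := ok_of_normal G hn
            have hbadz : ¬ Bad G (.a2 e) z := by
              intro hbad
              refine hok.2 ?_
              cases z with
              | g2 h' => simp only [Bad] at hbad ⊢; rw [← hcol]; exact hbad
              | vx v => simp [Bad] at hbad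
              | mx d => simp [Bad] at hbad
              | a1 d => simp [Bad] at hbad
              | a2 d => simp [Bad] at hbad
              | g1 d => simp [Bad] at hbad
            rw [act_cons_ok K G _ (normalW_tail G hn) hz (by simp [NV])
              (by rw [← hok.1]; simp [lr, hrng]) hbadz]
        rw [hres]
        by_cases hef : e = f
        · rw [if_pos hef, if_pos hef, sub_zero, habs hef]
          subst hef
          rfl
        · rw [if_neg hef, if_neg hef, sub_self]

end CLWork
namespace CLWork

open Classical L Finsupp

variable {Vt Ed : Type} (K : Type) [Field K] (G : BSG Vt Ed)

/-- R-c : `e₁* · f₁ = δ_{ef} m_e` -/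
lemma opRc {e f : Ed} (hrow : rowS G e = rowS G f) :
    op K G (.g1 e) * op K G (.a1 f) = if e = f then op K G (.mx e) else 0 := by
  have hsrc : G.src e = G.src f := src_eq_of_rowS_eq G hrow
  have hcomp : lr G (.g1 e : L Vt Ed) = ls G (.a1 f : L Vt Ed) := by simp [lr, ls, hsrc]
  apply end_ext
  intro b
  rw [Module.End.mul_apply, op_bw]
  have RHS : (if e = f then op K G (.mx e) else 0) (bw K b)
      = if e = f then act K G (.mx e) b else 0 := by
    split
    · rw [op_bw]
    · rw [LinearMap.zero_apply]
  rw [RHS]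
  by_cases hn : NormalW G b
  swap
  · rw [act_junk K G _ hn, map_zero, act_junk K G _ hn]
    split <;> rfl
  cases b with
  | nil =>
    rw [act_nil, op_bw,
      act_cons_pair K G (normalW_single G _) (by simp [NV]) (by simp [NV]) hcomp,
      pairVal_g1_a1, if_pos hrow, act_nil]
    split <;> rfl
  | cons y c =>
    by_cases hyv : NV y
    swap
    · have hc : c = [] := normalW_vert_head G hn hyv
      subst hc
      rw [act_vert_word K G _ hyv]
      have hcond : ((NV (.a1 f : L Vt Ed) ∧ lr G (.a1 f : L Vt Ed) = ls G y)
          ∨ (.a1 f : L Vt Ed) = y) ↔ lr G (.a1 f : L Vt Ed) = ls G y := by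
        constructor
        · rintro (⟨-, h⟩ | rfl)
          · exact h
          · exact absurd (by simp [NV] : NV (.a1 f : L Vt Ed)) hyv
        · exact fun h => Or.inl ⟨by simp [NV], h⟩
      by_cases h : lr G (.a1 f : L Vt Ed) = ls G y
      · rw [if_pos (hcond.mpr h), op_bw,
          act_cons_pair K G (normalW_single G _) (by simp [NV]) (by simp [NV]) hcomp,
          pairVal_g1_a1, if_pos hrow]
        by_cases hef : e = f
        · subst hef
          have huy : (.mx e : L Vt Ed) = y :=
            ls_inj_vert G (by simp [NV]) hyv (by rw [← h]; rfl)
          rw [if_pos rfl, resV_nil, if_pos rfl, act_vert_word K G _ hyv,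
            if_pos (Or.inr huy)]
        · rw [if_neg hef, if_neg hef]
      · rw [if_neg (fun hh => h (hcond.mp hh)), map_zero]
        by_cases hef : e = f
        · subst hef
          rw [if_pos rfl, act_vert_word K G _ hyv, if_neg]
          rintro (⟨h2, -⟩ | huy)
          · exact (by simp [NV] : ¬ NV (.mx e : L Vt Ed)) h2
          · exact h (by rw [← huy]; rfl)
        · rw [if_neg hef]
    -- y non-vertex
    by_cases hcomp2 : lr G (.a1 f : L Vt Ed) = ls G y
    swap
    · rw [act_head_zero K G _ hcomp2, map_zero]
      by_cases hef : e = f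
      · rw [if_pos hef, act_vert_head K G _ (by simp [NV]) hyv hn, if_neg]
        subst hef
        intro hh
        exact hcomp2 (by rw [← hh]; simp [lr, ls])
      · rw [if_neg hef]
    -- ls y = inr f : y = a2 f or g1 f
    have hls2 : ls G y = Sum.inr f := hcomp2.symm
    have hyf : y = .a2 f ∨ y = .g1 f := by
      rcases y with v | d | d | d | d | d
      · exact absurd hyv (by simp [NV])
      · exact absurd hyv (by simp [NV])
      · exact absurd hls2 (by simp [ls])
      · simp only [ls, Sum.inr.injEq] at hls2
        exact Or.inl (by rw [hls2])
      · simp only [ls, Sum.inr.injEq] at hls2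
        exact Or.inr (by rw [hls2])
      · exact absurd hls2 (by simp [ls])
    have habs : e = f → act K G (.mx e) (y :: c) = bw K (y :: c) := by
      intro hef
      rw [act_vert_head K G _ (by simp [NV]) hyv hn, if_pos]
      subst hef
      rcases hyf with rfl | rfl <;> simp [ls]
    rcases hyf with rfl | rfl
    · -- y = a2 f
      rw [act_cons_pair K G hn hyv (by simp [NV]) hcomp2, pairVal_a1_a2, op_bw]
      have hn2 : NormalW G (.a1 f :: .a2 f :: c) :=
        normalW_cons G (by simp [NV]) ⟨rfl, by simp [Bad]⟩ hn (by simp [NV])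
      rw [act_cons_pair K G hn2 (by simp [NV]) (by simp [NV]) hcomp,
        pairVal_g1_a1, if_pos hrow]
      by_cases hef : e = f
      · rw [if_pos hef, if_pos hef, resV_cons, habs hef]
      · rw [if_neg hef, if_neg hef]
    · -- y = g1 f
      by_cases hb1 : (f : Ed) = f ∧ rowS G f ∈ G.S ∧ hatR G f = f
      swap
      · rw [act_cons_pair K G hn hyv (by simp [NV]) hcomp2, pairVal_a1_g1, if_neg hb1,
          op_bw]
        have hn2 : NormalW G (.a1 f :: .g1 f :: c) :=
          normalW_cons G (by simp [NV]) ⟨hcomp2, by simpa [Bad] using hb1⟩ hn (by simp [NV])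
        rw [act_cons_pair K G hn2 (by simp [NV]) (by simp [NV]) hcomp,
          pairVal_g1_a1, if_pos hrow]
        by_cases hef : e = f
        · rw [if_pos hef, if_pos hef, resV_cons, habs hef]
        · rw [if_neg hef, if_neg hef]
      · obtain ⟨-, hS, hhat⟩ := hb1
        have hfin : (rowS G f).Finite := G.S_fin _ hS
        rw [act_cons_pair K G hn hyv (by simp [NV]) hcomp2, pairVal_a1_g1,
          if_pos ⟨rfl, hS, hhat⟩, map_sub, map_sum]
        have hsum : ∀ g ∈ (finrow G f).erase f,
            op K G (.g1 e) (bw K (.a1 g :: .g1 g :: c))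
              = if e = g then bw K (.g1 e :: c) else 0 := by
          intro g hg
          rw [Finset.mem_erase, mem_finrow G hfin] at hg
          obtain ⟨hgf, hgrow⟩ := hg
          have hrowg : rowS G g = rowS G f := (mem_rowS_iff G).mp hgrow
          have hsrcg : G.src g = G.src f := src_eq_of_rowS_eq G hrowg
          have hokg : Ok G (.a1 g) (.g1 g) := by
            refine ⟨rfl, ?_⟩
            simp only [Bad]
            rintro ⟨-, -, hhg⟩
            exact hgf (hhg.symm.trans ((hatR_congr G hrowg).trans hhat))
          have hnz : NormalW G (.g1 g :: c) := by
            cases c with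
            | nil => exact normalW_single G _
            | cons z c₂ =>
              obtain ⟨hok, hz, -⟩ := ok_of_normal G hn
              refine normalW_cons G (by simp [NV]) ⟨?_, ?_⟩ (normalW_tail G hn) hz
              · rw [← hok.1]; simp [lr, hsrcg]
              · intro hbad
                refine hok.2 ?_
                cases z with
                | a1 h' => simp only [Bad] at hbad ⊢; rw [← hrowg]; exact hbad
                | vx v => simp [Bad] at hbad
                | mx d => simp [Bad] at hbad
                | a2 d => simp [Bad] at hbad
                | g1 d => simp [Bad] at hbad
                | g2 d => simp [Bad] at hbad
          have hn3 : NormalW G (.a1 g :: .g1 g :: c) :=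
            normalW_cons G (by simp [NV]) hokg hnz (by simp [NV])
          rw [op_bw, act_cons_pair K G hn3 (by simp [NV]) (by simp [NV])
              (by simp [lr, ls, hsrc, hsrcg]), pairVal_g1_a1,
            if_pos (hrow.trans hrowg.symm)]
          by_cases hef : e = g
          · subst hef
            rw [if_pos rfl, if_pos rfl, resV_cons]
          · rw [if_neg hef, if_neg hef]
        rw [Finset.sum_congr rfl hsum]
        have hsum2 : (∑ g ∈ (finrow G f).erase f,
            if e = g then bw K (.g1 e :: c) else 0)
              = if e = f then 0 else bw K (.g1 e :: c) := by
          by_cases hef : e = f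
          · rw [if_pos hef]
            apply Finset.sum_eq_zero
            intro g hg
            rw [if_neg]
            rintro rfl
            exact (Finset.mem_erase.mp hg).1 hef
          · rw [if_neg hef, Finset.sum_eq_single e]
            · rw [if_pos rfl]
            · intro g _ hge
              rw [if_neg (fun h => hge h.symm)]
            · intro hne
              exfalso
              apply hne
              rw [Finset.mem_erase, mem_finrow G hfin]
              exact ⟨hef, hrow ▸ mem_rowS G e⟩
        rw [hsum2]
        have hres : op K G (.g1 e) (resV K (.vx (G.src f)) c) = bw K (.g1 e :: c) := by
          cases c with
          | nil =>
            rw [resV_nil, op_bw, act_vert_word K G _ (by simp [NV]), if_pos]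
            exact Or.inl ⟨by simp [NV], by simp [lr, ls, hsrc]⟩
          | cons z c₂ =>
            rw [resV_cons, op_bw]
            obtain ⟨hok, hz, -⟩ := ok_of_normal G hn
            have hbadz : ¬ Bad G (.g1 e) z := by
              intro hbad
              refine hok.2 ?_
              cases z with
              | a1 h' => simp only [Bad] at hbad ⊢; rw [← hrow]; exact hbad
              | vx v => simp [Bad] at hbad
              | mx d => simp [Bad] at hbad
              | a2 d => simp [Bad] at hbad
              | g1 d => simp [Bad] at hbad
              | g2 d => simp [Bad] at hbad
            rw [act_cons_ok K G _ (normalW_tail G hn) hz (by simp [NV])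
              (by rw [← hok.1]; simp [lr, hsrc]) hbadz]
        rw [hres]
        by_cases hef : e = f
        · rw [if_pos hef, if_pos hef, sub_zero, habs hef]
          subst hef
          rfl
        · rw [if_neg hef, if_neg hef, sub_self]

end CLWork
namespace CLWork

open Classical L Finsupp

variable {Vt Ed : Type} (K : Type) [Field K] (G : BSG Vt Ed)

/-- R-a : `Σ_{f∈X} f₁ f₁* = s(X)` for `X ∈ S` -/
lemma opRa [Nonempty Vt] {X : Set Ed} (hX : X ∈ G.S) :
    ∑ f ∈ (G.S_fin X hX).toFinset, op K G (.a1 f) * op K G (.g1 f)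
      = op K G (.vx (G.srcOf X)) := by
  have hXC : X ∈ G.C := G.S_sub hX
  have hne : X.Nonempty := G.C_ne _ hXC
  set finX := (G.S_fin X hX).toFinset with hfinX
  have hmemX : ∀ {g : Ed}, g ∈ finX ↔ g ∈ X := fun {g} => Set.Finite.mem_toFinset _
  obtain ⟨f₀, hf₀⟩ := hne
  set eh := hatR G f₀ with heh
  have hrowf₀ : rowS G f₀ = X := rowS_eq G hXC hf₀
  have heh_mem : eh ∈ X := hrowf₀ ▸ hatR_mem G f₀
  have hrow : ∀ {f : Ed}, f ∈ X → rowS G f = X := fun hf => rowS_eq G hXC hf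
  have hkey : ∀ {f : Ed}, f ∈ X → hatR G f = eh := fun {f} hf =>
    hatR_congr G ((hrow hf).trans hrowf₀.symm)
  have hsrc : ∀ {f : Ed}, f ∈ X → G.src f = G.srcOf X := fun {f} hf =>
    (srcOf_eq G hXC hf).symm
  have hfr : ∀ {f : Ed}, f ∈ X → finrow G f = finX := by
    intro f hf
    ext g
    rw [mem_finrow G (by rw [hrow hf]; exact G.S_fin X hX), hrow hf, hmemX]
  have hcond : ∀ {f : Ed}, f ∈ X →
      ((f = f ∧ rowS G f ∈ G.S ∧ hatR G f = f) ↔ f = eh) := by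
    intro f hf
    constructor
    · rintro ⟨-, -, hh⟩
      exact ((hkey hf) ▸ hh).symm ▸ rfl
    · rintro rfl
      exact ⟨rfl, (hrow hf).symm ▸ hX, hkey hf⟩
  apply end_ext
  intro b
  rw [LinearMap.sum_apply]
  simp only [Module.End.mul_apply, op_bw]
  by_cases hn : NormalW G b
  swap
  · rw [act_junk K G _ hn]
    rw [Finset.sum_eq_zero]
    intro f _
    rw [act_junk K G _ hn, map_zero]
  -- telescoping helper for the `nil` and `[u]` style case
  have pair_eval : ∀ f ∈ finX, act K G (.a1 f) [(.g1 f : L Vt Ed)]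
      = if f = eh then
          (bw K [(.vx (G.src f) : L Vt Ed)]
            - ∑ g ∈ finX.erase f, bw K [(.a1 g : L Vt Ed), .g1 g])
        else bw K [(.a1 f : L Vt Ed), .g1 f] := by
    intro f hf
    rw [act_cons_pair K G (normalW_single G _) (by simp [NV]) (by simp [NV]) (by simp [lr, ls]),
      pairVal_a1_g1]
    by_cases hfe : f = eh
    · rw [if_pos ((hcond (hmemX.mp hf)).mpr hfe), if_pos hfe, resV_nil,
        hfr (hmemX.mp hf)]
    · rw [if_neg (fun hc => hfe ((hcond (hmemX.mp hf)).mp hc)), if_neg hfe]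
  have tele_nil : ∑ f ∈ finX, (if f = eh then
          (bw K [(.vx (G.src f) : L Vt Ed)]
            - ∑ g ∈ finX.erase f, bw K [(.a1 g : L Vt Ed), .g1 g])
        else bw K [(.a1 f : L Vt Ed), .g1 f])
      = bw K [(.vx (G.srcOf X) : L Vt Ed)] := by
    rw [← Finset.add_sum_erase _ _ (hmemX.mpr heh_mem), if_pos rfl]
    have : ∀ g ∈ finX.erase eh, (if g = eh then
          (bw K [(.vx (G.src g) : L Vt Ed)]
            - ∑ g' ∈ finX.erase g, bw K [(.a1 g' : L Vt Ed), .g1 g'])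
        else bw K [(.a1 g : L Vt Ed), .g1 g]) = bw K [(.a1 g : L Vt Ed), .g1 g] := by
      intro g hg
      rw [if_neg (Finset.mem_erase.mp hg).1]
    rw [Finset.sum_congr rfl this, sub_add_cancel, hsrc heh_mem]
  cases b with
  | nil =>
    simp only [act_nil, op_bw]
    rw [Finset.sum_congr rfl pair_eval, tele_nil]
  | cons y c =>
    by_cases hyv : NV y
    swap
    · -- vertex word [u]
      have hc : c = [] := normalW_vert_head G hn hyv
      subst hc
      by_cases hls : ls G y = Sum.inl (G.srcOf X)
      · have huy : (.vx (G.srcOf X) : L Vt Ed) = y :=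
          ls_inj_vert G (by simp [NV]) hyv hls.symm
        have hstep : ∀ f ∈ finX, act K G (.g1 f) [y] = bw K [(.g1 f : L Vt Ed)] := by
          intro f hf
          rw [act_vert_word K G _ hyv, if_pos]
          exact Or.inl ⟨by simp [NV], by
            simp only [lr]
            rw [hsrc (hmemX.mp hf)]
            exact hls.symm⟩
        calc ∑ f ∈ finX, op K G (.a1 f) (act K G (.g1 f) [y])
            = ∑ f ∈ finX, (if f = eh then
                (bw K [(.vx (G.src f) : L Vt Ed)]
                  - ∑ g ∈ finX.erase f, bw K [(.a1 g : L Vt Ed), .g1 g])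
              else bw K [(.a1 f : L Vt Ed), .g1 f]) := by
              apply Finset.sum_congr rfl
              intro f hf
              rw [hstep f hf, op_bw, pair_eval f hf]
          _ = bw K [(.vx (G.srcOf X) : L Vt Ed)] := tele_nil
          _ = act K G (.vx (G.srcOf X)) [y] := by
              rw [act_vert_word K G _ hyv, if_pos (Or.inr huy)]
      · rw [act_vert_word K G _ hyv, if_neg]
        swap
        · rintro (⟨-, hh⟩ | rfl)
          · exact hls (by rw [← hh]; rfl)
          · exact hls rfl
        rw [Finset.sum_eq_zero]
        intro f hf
        rw [act_vert_word K G _ hyv, if_neg, map_zero]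
        rintro (⟨-, hh⟩ | rfl)
        · refine hls ?_
          rw [← hh]
          simp only [lr]
          rw [hsrc (hmemX.mp hf)]
        · exact hyv trivial
      -- end vertex case
    · -- y non-vertex
      by_cases hcomp : ls G y = Sum.inl (G.srcOf X)
      swap
      · rw [act_vert_head K G _ (by simp [NV]) hyv hn, if_neg (fun hh => hcomp hh.symm)]
        rw [Finset.sum_eq_zero]
        intro f hf
        rw [act_head_zero K G _, map_zero]
        intro hh
        refine hcomp ?_
        rw [← hh]
        simp only [lr]
        rw [hsrc (hmemX.mp hf)]
      · -- composable case
        have RHSv : act K G (.vx (G.srcOf X)) (y :: c) = bw K (y :: c) := by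
          rw [act_vert_head K G _ (by simp [NV]) hyv hn,
            if_pos (show ls G (.vx (G.srcOf X) : L Vt Ed) = ls G y from hcomp.symm)]
        rw [RHSv]
        have hcompf : ∀ {f : Ed}, f ∈ X → lr G (.g1 f : L Vt Ed) = ls G y := by
          intro f hf
          simp only [lr]
          rw [hsrc hf]
          exact hcomp.symm
        -- telescoping when no Bad pair occurs
        have tele : (∀ f ∈ X, ¬ Bad G (.g1 f) y) →
            ∑ f ∈ finX, op K G (.a1 f) (act K G (.g1 f) (y :: c)) = bw K (y :: c) := by
          intro hnb
          have each : ∀ f ∈ finX, op K G (.a1 f) (act K G (.g1 f) (y :: c))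
              = if f = eh then
                  (bw K (y :: c) - ∑ g ∈ finX.erase f, bw K (.a1 g :: .g1 g :: y :: c))
                else bw K (.a1 f :: .g1 f :: y :: c) := by
            intro f hf
            have hfX := hmemX.mp hf
            rw [act_cons_ok K G _ hn hyv (by simp [NV]) (hcompf hfX) (hnb f hfX)]
            have hn2 : NormalW G (.g1 f :: y :: c) :=
              normalW_cons G (by simp [NV]) ⟨hcompf hfX, hnb f hfX⟩ hn hyv
            rw [op_bw, act_cons_pair K G hn2 (by simp [NV]) (by simp [NV]) (by simp [lr, ls]),
              pairVal_a1_g1]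
            by_cases hfe : f = eh
            · rw [if_pos ((hcond hfX).mpr hfe), if_pos hfe, resV_cons, hfr hfX]
            · rw [if_neg (fun hc => hfe ((hcond hfX).mp hc)), if_neg hfe]
          rw [Finset.sum_congr rfl each, ← Finset.add_sum_erase _ _ (hmemX.mpr heh_mem),
            if_pos rfl]
          have : ∀ g ∈ finX.erase eh, (if g = eh then
              (bw K (y :: c) - ∑ g' ∈ finX.erase g, bw K (.a1 g' :: .g1 g' :: y :: c))
            else bw K (.a1 g :: .g1 g :: y :: c)) = bw K (.a1 g :: .g1 g :: y :: c) := by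
            intro g hg
            rw [if_neg (Finset.mem_erase.mp hg).1]
          rw [Finset.sum_congr rfl this, sub_add_cancel]
        rcases y with v | d | h | d | d | h
        · exact absurd hyv (by simp [NV])
        · exact absurd hyv (by simp [NV])
        · -- y = a1 h
          by_cases hin : rowS G h = X
          · -- absorbing case
            have hhX : h ∈ X := hin ▸ mem_rowS G h
            rw [Finset.sum_eq_single h]
            · have hstep : act K G (.g1 h) (.a1 h :: c) = resV K (.mx h) c := by
                rw [act_cons_pair K G hn hyv (by simp [NV]) (hcompf hhX),
                  pairVal_g1_a1, if_pos rfl, if_pos rfl]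
              rw [hstep]
              cases c with
              | nil =>
                rw [resV_nil, op_bw, act_vert_word K G _ (by simp [NV]), if_pos]
                exact Or.inl ⟨by simp [NV], rfl⟩
              | cons z c₂ =>
                rw [resV_cons, op_bw]
                obtain ⟨hok, hz, -⟩ := ok_of_normal G hn
                rw [act_cons_ok K G _ (normalW_tail G hn) hz (by simp [NV]) hok.1 hok.2]
            · intro f hf hfh
              rw [act_cons_pair K G hn hyv (by simp [NV]) (hcompf (hmemX.mp hf)),
                pairVal_g1_a1, if_pos (by rw [hrow (hmemX.mp hf), hin]), if_neg hfh,
                map_zero]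
            · intro hne2
              exact absurd (hmemX.mpr hhX) hne2
          · -- non-absorbing: Bad never holds
            refine tele ?_
            intro f hf
            simp only [Bad]
            rw [hrow hf]
            exact fun hh => hin hh.symm
        · exact absurd hcomp (by simp [ls])
        · exact absurd hcomp (by simp [ls])
        · -- y = g2 h
          refine tele ?_
          intro f hf
          simp [Bad]

/-- R-e : `Σ_{f∈Y} f₂* f₂ = r(Y)` for `Y ∈ T` -/
lemma opRe [Nonempty Vt] {Y : Set Ed} (hY : Y ∈ G.T) :
    ∑ f ∈ (G.T_fin Y hY).toFinset, op K G (.g2 f) * op K G (.a2 f)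
      = op K G (.vx (G.rngOf Y)) := by
  have hYD : Y ∈ G.D := G.T_sub hY
  have hne : Y.Nonempty := G.D_ne _ hYD
  set finY := (G.T_fin Y hY).toFinset with hfinY
  have hmemY : ∀ {g : Ed}, g ∈ finY ↔ g ∈ Y := fun {g} => Set.Finite.mem_toFinset _
  obtain ⟨f₀, hf₀⟩ := hne
  set eh := hatC G f₀ with heh
  have hcolf₀ : colS G f₀ = Y := colS_eq G hYD hf₀
  have heh_mem : eh ∈ Y := hcolf₀ ▸ hatC_mem G f₀
  have hcol : ∀ {f : Ed}, f ∈ Y → colS G f = Y := fun hf => colS_eq G hYD hf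
  have hkey : ∀ {f : Ed}, f ∈ Y → hatC G f = eh := fun {f} hf =>
    hatC_congr G ((hcol hf).trans hcolf₀.symm)
  have hrng : ∀ {f : Ed}, f ∈ Y → G.rng f = G.rngOf Y := fun {f} hf =>
    (rngOf_eq G hYD hf).symm
  have hfc : ∀ {f : Ed}, f ∈ Y → fincol G f = finY := by
    intro f hf
    ext g
    rw [mem_fincol G (by rw [hcol hf]; exact G.T_fin Y hY), hcol hf, hmemY]
  have hcond : ∀ {f : Ed}, f ∈ Y →
      ((f = f ∧ colS G f ∈ G.T ∧ hatC G f = f) ↔ f = eh) := by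
    intro f hf
    constructor
    · rintro ⟨-, -, hh⟩
      exact ((hkey hf) ▸ hh).symm ▸ rfl
    · rintro rfl
      exact ⟨rfl, (hcol hf).symm ▸ hY, hkey hf⟩
  apply end_ext
  intro b
  rw [LinearMap.sum_apply]
  simp only [Module.End.mul_apply, op_bw]
  by_cases hn : NormalW G b
  swap
  · rw [act_junk K G _ hn]
    rw [Finset.sum_eq_zero]
    intro f _
    rw [act_junk K G _ hn, map_zero]
  have pair_eval : ∀ f ∈ finY, act K G (.g2 f) [(.a2 f : L Vt Ed)]
      = if f = eh then
          (bw K [(.vx (G.rng f) : L Vt Ed)]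
            - ∑ g ∈ finY.erase f, bw K [(.g2 g : L Vt Ed), .a2 g])
        else bw K [(.g2 f : L Vt Ed), .a2 f] := by
    intro f hf
    rw [act_cons_pair K G (normalW_single G _) (by simp [NV]) (by simp [NV]) (by simp [lr, ls]),
      pairVal_g2_a2]
    by_cases hfe : f = eh
    · rw [if_pos ((hcond (hmemY.mp hf)).mpr hfe), if_pos hfe, resV_nil,
        hfc (hmemY.mp hf)]
    · rw [if_neg (fun hc => hfe ((hcond (hmemY.mp hf)).mp hc)), if_neg hfe]
  have tele_nil : ∑ f ∈ finY, (if f = eh then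
          (bw K [(.vx (G.rng f) : L Vt Ed)]
            - ∑ g ∈ finY.erase f, bw K [(.g2 g : L Vt Ed), .a2 g])
        else bw K [(.g2 f : L Vt Ed), .a2 f])
      = bw K [(.vx (G.rngOf Y) : L Vt Ed)] := by
    rw [← Finset.add_sum_erase _ _ (hmemY.mpr heh_mem), if_pos rfl]
    have : ∀ g ∈ finY.erase eh, (if g = eh then
          (bw K [(.vx (G.rng g) : L Vt Ed)]
            - ∑ g' ∈ finY.erase g, bw K [(.g2 g' : L Vt Ed), .a2 g'])
        else bw K [(.g2 g : L Vt Ed), .a2 g]) = bw K [(.g2 g : L Vt Ed), .a2 g] := by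
      intro g hg
      rw [if_neg (Finset.mem_erase.mp hg).1]
    rw [Finset.sum_congr rfl this, sub_add_cancel, hrng heh_mem]
  cases b with
  | nil =>
    simp only [act_nil, op_bw]
    rw [Finset.sum_congr rfl pair_eval, tele_nil]
  | cons y c =>
    by_cases hyv : NV y
    swap
    · have hc : c = [] := normalW_vert_head G hn hyv
      subst hc
      by_cases hls : ls G y = Sum.inl (G.rngOf Y)
      · have huy : (.vx (G.rngOf Y) : L Vt Ed) = y :=
          ls_inj_vert G (by simp [NV]) hyv hls.symm
        have hstep : ∀ f ∈ finY, act K G (.a2 f) [y] = bw K [(.a2 f : L Vt Ed)] := by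
          intro f hf
          rw [act_vert_word K G _ hyv, if_pos]
          exact Or.inl ⟨by simp [NV], by
            simp only [lr]
            rw [hrng (hmemY.mp hf)]
            exact hls.symm⟩
        calc ∑ f ∈ finY, op K G (.g2 f) (act K G (.a2 f) [y])
            = ∑ f ∈ finY, (if f = eh then
                (bw K [(.vx (G.rng f) : L Vt Ed)]
                  - ∑ g ∈ finY.erase f, bw K [(.g2 g : L Vt Ed), .a2 g])
              else bw K [(.g2 f : L Vt Ed), .a2 f]) := by
              apply Finset.sum_congr rfl
              intro f hf
              rw [hstep f hf, op_bw, pair_eval f hf]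
          _ = bw K [(.vx (G.rngOf Y) : L Vt Ed)] := tele_nil
          _ = act K G (.vx (G.rngOf Y)) [y] := by
              rw [act_vert_word K G _ hyv, if_pos (Or.inr huy)]
      · rw [act_vert_word K G _ hyv, if_neg]
        swap
        · rintro (⟨-, hh⟩ | rfl)
          · exact hls (by rw [← hh]; rfl)
          · exact hls rfl
        rw [Finset.sum_eq_zero]
        intro f hf
        rw [act_vert_word K G _ hyv, if_neg, map_zero]
        rintro (⟨-, hh⟩ | rfl)
        · refine hls ?_
          rw [← hh]
          simp only [lr]
          rw [hrng (hmemY.mp hf)]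
        · exact hyv trivial
    · by_cases hcomp : ls G y = Sum.inl (G.rngOf Y)
      swap
      · rw [act_vert_head K G _ (by simp [NV]) hyv hn, if_neg (fun hh => hcomp hh.symm)]
        rw [Finset.sum_eq_zero]
        intro f hf
        rw [act_head_zero K G _, map_zero]
        intro hh
        refine hcomp ?_
        rw [← hh]
        simp only [lr]
        rw [hrng (hmemY.mp hf)]
      · have RHSv : act K G (.vx (G.rngOf Y)) (y :: c) = bw K (y :: c) := by
          rw [act_vert_head K G _ (by simp [NV]) hyv hn,
            if_pos (show ls G (.vx (G.rngOf Y) : L Vt Ed) = ls G y from hcomp.symm)]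
        rw [RHSv]
        have hcompf : ∀ {f : Ed}, f ∈ Y → lr G (.a2 f : L Vt Ed) = ls G y := by
          intro f hf
          simp only [lr]
          rw [hrng hf]
          exact hcomp.symm
        have tele : (∀ f ∈ Y, ¬ Bad G (.a2 f) y) →
            ∑ f ∈ finY, op K G (.g2 f) (act K G (.a2 f) (y :: c)) = bw K (y :: c) := by
          intro hnb
          have each : ∀ f ∈ finY, op K G (.g2 f) (act K G (.a2 f) (y :: c))
              = if f = eh then
                  (bw K (y :: c) - ∑ g ∈ finY.erase f, bw K (.g2 g :: .a2 g :: y :: c))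
                else bw K (.g2 f :: .a2 f :: y :: c) := by
            intro f hf
            have hfY := hmemY.mp hf
            rw [act_cons_ok K G _ hn hyv (by simp [NV]) (hcompf hfY) (hnb f hfY)]
            have hn2 : NormalW G (.a2 f :: y :: c) :=
              normalW_cons G (by simp [NV]) ⟨hcompf hfY, hnb f hfY⟩ hn hyv
            rw [op_bw, act_cons_pair K G hn2 (by simp [NV]) (by simp [NV]) (by simp [lr, ls]),
              pairVal_g2_a2]
            by_cases hfe : f = eh
            · rw [if_pos ((hcond hfY).mpr hfe), if_pos hfe, resV_cons, hfc hfY]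
            · rw [if_neg (fun hc => hfe ((hcond hfY).mp hc)), if_neg hfe]
          rw [Finset.sum_congr rfl each, ← Finset.add_sum_erase _ _ (hmemY.mpr heh_mem),
            if_pos rfl]
          have : ∀ g ∈ finY.erase eh, (if g = eh then
              (bw K (y :: c) - ∑ g' ∈ finY.erase g, bw K (.g2 g' :: .a2 g' :: y :: c))
            else bw K (.g2 g :: .a2 g :: y :: c)) = bw K (.g2 g :: .a2 g :: y :: c) := by
            intro g hg
            rw [if_neg (Finset.mem_erase.mp hg).1]
          rw [Finset.sum_congr rfl this, sub_add_cancel]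
        rcases y with v | d | d | d | d | h
        · exact absurd hyv (by simp [NV])
        · exact absurd hyv (by simp [NV])
        · -- y = a1 d
          refine tele ?_
          intro f hf
          simp [Bad]
        · exact absurd hcomp (by simp [ls])
        · exact absurd hcomp (by simp [ls])
        · -- y = g2 h
          by_cases hin : colS G h = Y
          · have hhY : h ∈ Y := hin ▸ mem_colS G h
            rw [Finset.sum_eq_single h]
            · have hstep : act K G (.a2 h) (.g2 h :: c) = resV K (.mx h) c := by
                rw [act_cons_pair K G hn hyv (by simp [NV]) (hcompf hhY),
                  pairVal_a2_g2, if_pos rfl, if_pos rfl]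
              rw [hstep]
              cases c with
              | nil =>
                rw [resV_nil, op_bw, act_vert_word K G _ (by simp [NV]), if_pos]
                exact Or.inl ⟨by simp [NV], rfl⟩
              | cons z c₂ =>
                rw [resV_cons, op_bw]
                obtain ⟨hok, hz, -⟩ := ok_of_normal G hn
                rw [act_cons_ok K G _ (normalW_tail G hn) hz (by simp [NV]) hok.1 hok.2]
            · intro f hf hfh
              rw [act_cons_pair K G hn hyv (by simp [NV]) (hcompf (hmemY.mp hf)),
                pairVal_a2_g2, if_pos (by rw [hcol (hmemY.mp hf), hin]), if_neg hfh,
                map_zero]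
            · intro hne2
              exact absurd (hmemY.mpr hhY) hne2
          · refine tele ?_
            intro f hf
            simp only [Bad]
            rw [hcol hf]
            exact fun hh => hin hh.symm

end CLWork
namespace CLWork

open Classical L Finsupp BSG

variable {Vt Ed : Type} (K : Type) [Field K] (G : BSG Vt Ed)

/-- images of the Cohn–Leavitt generators -/
noncomputable def genMap : CLGen Vt Ed → Module.End K (V K Vt Ed)
  | .vert v => op K G (.vx v)
  | .edge e => op K G (.a1 e) * op K G (.a2 e)
  | .ghost e => op K G (.g2 e) * op K G (.g1 e)

@[simp] lemma genMap_vert (v : Vt) : genMap K G (CLGen.vert v) = op K G (.vx v) := rfl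
@[simp] lemma genMap_edge (e : Ed) :
    genMap K G (CLGen.edge e) = op K G (.a1 e) * op K G (.a2 e) := rfl
@[simp] lemma genMap_ghost (e : Ed) :
    genMap K G (CLGen.ghost e) = op K G (.g2 e) * op K G (.g1 e) := rfl

noncomputable def Psi : FreeAlgebra K (CLGen Vt Ed) →ₐ[K] Module.End K (V K Vt Ed) :=
  FreeAlgebra.lift K (genMap K G)

@[simp] lemma Psi_iota (x : CLGen Vt Ed) : Psi K G (FreeAlgebra.ι K x) = genMap K G x :=
  FreeAlgebra.lift_ι_apply _ _

lemma Psi_edgeTerm {X Y : Set Ed} (h : (X ∩ Y).Nonempty) :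
    Psi K G (edgeTerm K X Y) = op K G (.a1 h.some) * op K G (.a2 h.some) := by
  rw [edgeTerm, dif_pos h, Psi_iota, genMap_edge]

lemma Psi_ghostTerm {X Y : Set Ed} (h : (X ∩ Y).Nonempty) :
    Psi K G (ghostTerm K X Y) = op K G (.g2 h.some) * op K G (.g1 h.some) := by
  rw [ghostTerm, dif_pos h, Psi_iota, genMap_ghost]

lemma edgeTerm_zero {X Y : Set Ed} (h : ¬ (X ∩ Y).Nonempty) :
    edgeTerm K X Y = (0 : FreeAlgebra K (CLGen Vt Ed)) := dif_neg h

lemma ghostTerm_zero {X Y : Set Ed} (h : ¬ (X ∩ Y).Nonempty) :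
    ghostTerm K X Y = (0 : FreeAlgebra K (CLGen Vt Ed)) := dif_neg h

lemma Psi_rel [Nonempty Vt] : ∀ ⦃a b : FreeAlgebra K (CLGen Vt Ed)⦄,
    CLRel K G a b → Psi K G a = Psi K G b := by
  intro a b hrel
  induction hrel with
  | vv v w =>
    rw [map_mul, Psi_iota, Psi_iota, genMap_vert, genMap_vert,
      op_vert_mul K G (by simp [NV] : ¬ NV (.vx v : L Vt Ed)) (.vx w)]
    by_cases h : v = w
    · subst h
      rw [if_pos rfl, if_pos rfl, Psi_iota, genMap_vert]
    · rw [if_neg (by simpa [ls] using h), if_neg h, map_zero]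
  | se e =>
    rw [map_mul, Psi_iota, Psi_iota, genMap_vert, genMap_edge, ← mul_assoc,
      op_vert_mul K G (by simp [NV]) (.a1 e),
      if_pos (show ls G (.vx (G.src e) : L Vt Ed) = ls G (.a1 e : L Vt Ed) from rfl)]
  | er e =>
    rw [map_mul, Psi_iota, Psi_iota, genMap_vert, genMap_edge, mul_assoc,
      mul_op_vert K G (by simp [NV]) (.a2 e),
      if_pos (show lr G (.a2 e : L Vt Ed) = ls G (.vx (G.rng e) : L Vt Ed) from rfl)]
  | rg e =>
    rw [map_mul, Psi_iota, Psi_iota, genMap_vert, genMap_ghost, ← mul_assoc,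
      op_vert_mul K G (by simp [NV]) (.g2 e),
      if_pos (show ls G (.vx (G.rng e) : L Vt Ed) = ls G (.g2 e : L Vt Ed) from rfl)]
  | gs e =>
    rw [map_mul, Psi_iota, Psi_iota, genMap_vert, genMap_ghost, mul_assoc,
      mul_op_vert K G (by simp [NV]) (.g1 e),
      if_pos (show lr G (.g1 e : L Vt Ed) = ls G (.vx (G.src e) : L Vt Ed) from rfl)]
  | a1 X X' hX hX' =>
    have hXC : X ∈ G.C := G.S_sub hX
    have hX'C : X' ∈ G.C := G.S_sub hX'
    set 𝒴 : Finset (Set Ed) := (G.S_fin X hX).toFinset.image (fun f => colS G f) with h𝒴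
    have hconv : (∑ᶠ Y ∈ G.D, edgeTerm K X Y * ghostTerm K X' Y
          : FreeAlgebra K (CLGen Vt Ed))
        = ∑ Y ∈ 𝒴, (edgeTerm K X Y * ghostTerm K X' Y
          : FreeAlgebra K (CLGen Vt Ed)) := by
      apply finsum_mem_eq_sum_of_subset
      · rintro Y ⟨hYD, hYs⟩
        rw [Function.mem_support] at hYs
        have hne : (X ∩ Y).Nonempty := by
          by_contra hcon
          exact hYs (by
            show edgeTerm K X Y * ghostTerm K X' Y = 0
            rw [edgeTerm_zero K hcon, zero_mul])
        obtain ⟨f, hfX, hfY⟩ := hne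
        simp only [h𝒴, Finset.coe_image, Set.mem_image, Finset.mem_coe,
          Set.Finite.mem_toFinset]
        exact ⟨f, hfX, colS_eq G hYD hfY⟩
      · intro Y hY
        simp only [h𝒴, Finset.coe_image, Set.mem_image, Finset.mem_coe,
          Set.Finite.mem_toFinset] at hY
        obtain ⟨f, -, rfl⟩ := hY
        exact colS_inD G f
    rw [hconv, map_sum]
    by_cases hXX : X = X'
    · subst hXX
      rw [if_pos rfl, Psi_iota, genMap_vert]
      have hterm : ∀ f ∈ (G.S_fin X hX).toFinset,
          Psi K G (edgeTerm K X (colS G f) * ghostTerm K X (colS G f))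
            = op K G (.a1 f) * op K G (.g1 f) := by
        intro f hf
        have hfX : f ∈ X := (Set.Finite.mem_toFinset _).mp hf
        have hne : (X ∩ colS G f).Nonempty := ⟨f, hfX, mem_colS G f⟩
        have hd : hne.some = f := by
          have hmem := hne.some_mem
          exact row_col_unique G
            ((rowS_eq G hXC hmem.1).trans (rowS_eq G hXC hfX).symm)
            (colS_eq G (colS_inD G f) hmem.2)
        rw [map_mul, Psi_edgeTerm K G hne, Psi_ghostTerm K G hne, hd]
        rw [mul_assoc (op K G (.a1 f)), ← mul_assoc (op K G (.a2 f)),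
          opRd K G rfl, if_pos rfl, ← mul_assoc,
          mul_op_vert K G (by simp [NV]) (.a1 f),
          if_pos (show lr G (.a1 f : L Vt Ed) = ls G (.mx f : L Vt Ed) from rfl)]
      rw [h𝒴, Finset.sum_image, Finset.sum_congr rfl hterm, opRa K G hX]
      intro f hf g hg hfg
      exact row_col_unique G
        (((rowS_eq G hXC ((Set.Finite.mem_toFinset _).mp hf))).trans
          (rowS_eq G hXC ((Set.Finite.mem_toFinset _).mp hg)).symm) hfg
    · rw [if_neg hXX, map_zero]
      apply Finset.sum_eq_zero
      intro Y hYmem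
      by_cases hne' : (X' ∩ Y).Nonempty
      swap
      · rw [ghostTerm_zero K hne', mul_zero, map_zero]
      by_cases hne : (X ∩ Y).Nonempty
      swap
      · rw [edgeTerm_zero K hne, zero_mul, map_zero]
      have hYD : Y ∈ G.D := by
        simp only [h𝒴, Finset.mem_image, Set.Finite.mem_toFinset] at hYmem
        obtain ⟨f, -, rfl⟩ := hYmem
        exact colS_inD G f
      have hdd' : hne.some ≠ hne'.some := by
        intro hcon
        have h1 := hne.some_mem.1
        have h2 := hne'.some_mem.1
        rw [hcon] at h1
        exact (G.C_disj _ hXC _ hX'C hXX).ne_of_mem h1 h2 rfl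
      rw [map_mul, Psi_edgeTerm K G hne, Psi_ghostTerm K G hne']
      rw [mul_assoc (op K G (.a1 hne.some)), ← mul_assoc (op K G (.a2 hne.some)),
        opRd K G ((colS_eq G hYD hne.some_mem.2).trans
          (colS_eq G hYD hne'.some_mem.2).symm), if_neg hdd']
      simp
  | a2 Y Y' hY hY' =>
    have hYD : Y ∈ G.D := G.T_sub hY
    have hY'D : Y' ∈ G.D := G.T_sub hY'
    set 𝒳 : Finset (Set Ed) := (G.T_fin Y hY).toFinset.image (fun f => rowS G f) with h𝒳
    have hconv : (∑ᶠ X ∈ G.C, ghostTerm K X Y * edgeTerm K X Y'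
          : FreeAlgebra K (CLGen Vt Ed))
        = ∑ X ∈ 𝒳, (ghostTerm K X Y * edgeTerm K X Y'
          : FreeAlgebra K (CLGen Vt Ed)) := by
      apply finsum_mem_eq_sum_of_subset
      · rintro X ⟨hXC, hXs⟩
        rw [Function.mem_support] at hXs
        have hne : (X ∩ Y).Nonempty := by
          by_contra hcon
          exact hXs (by
            show ghostTerm K X Y * edgeTerm K X Y' = 0
            rw [ghostTerm_zero K hcon, zero_mul])
        obtain ⟨f, hfX, hfY⟩ := hne
        simp only [h𝒳, Finset.coe_image, Set.mem_image, Finset.mem_coe,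
          Set.Finite.mem_toFinset]
        exact ⟨f, hfY, rowS_eq G hXC hfX⟩
      · intro X hX
        simp only [h𝒳, Finset.coe_image, Set.mem_image, Finset.mem_coe,
          Set.Finite.mem_toFinset] at hX
        obtain ⟨f, -, rfl⟩ := hX
        exact rowS_inC G f
    rw [hconv, map_sum]
    by_cases hYY : Y = Y'
    · subst hYY
      rw [if_pos rfl, Psi_iota, genMap_vert]
      have hterm : ∀ f ∈ (G.T_fin Y hY).toFinset,
          Psi K G (ghostTerm K (rowS G f) Y * edgeTerm K (rowS G f) Y)
            = op K G (.g2 f) * op K G (.a2 f) := by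
        intro f hf
        have hfY : f ∈ Y := (Set.Finite.mem_toFinset _).mp hf
        have hne : (rowS G f ∩ Y).Nonempty := ⟨f, mem_rowS G f, hfY⟩
        have hd : hne.some = f := by
          have hmem := hne.some_mem
          exact row_col_unique G
            (rowS_eq G (rowS_inC G f) hmem.1)
            ((colS_eq G hYD hmem.2).trans (colS_eq G hYD hfY).symm)
        rw [map_mul, Psi_edgeTerm K G hne, Psi_ghostTerm K G hne, hd]
        rw [mul_assoc (op K G (.g2 f)), ← mul_assoc (op K G (.g1 f)),
          opRc K G rfl, if_pos rfl, ← mul_assoc,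
          mul_op_vert K G (by simp [NV]) (.g2 f),
          if_pos (show lr G (.g2 f : L Vt Ed) = ls G (.mx f : L Vt Ed) from rfl)]
      rw [h𝒳, Finset.sum_image, Finset.sum_congr rfl hterm, opRe K G hY]
      intro f hf g hg hfg
      exact row_col_unique G hfg
        (((colS_eq G hYD ((Set.Finite.mem_toFinset _).mp hf))).trans
          (colS_eq G hYD ((Set.Finite.mem_toFinset _).mp hg)).symm)
    · rw [if_neg hYY, map_zero]
      apply Finset.sum_eq_zero
      intro X hXmem
      by_cases hne' : (X ∩ Y').Nonempty
      swap
      · rw [edgeTerm_zero K hne', mul_zero, map_zero]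
      by_cases hne : (X ∩ Y).Nonempty
      swap
      · rw [ghostTerm_zero K hne, zero_mul, map_zero]
      have hXC : X ∈ G.C := by
        simp only [h𝒳, Finset.mem_image, Set.Finite.mem_toFinset] at hXmem
        obtain ⟨f, -, rfl⟩ := hXmem
        exact rowS_inC G f
      have hdd' : hne.some ≠ hne'.some := by
        intro hcon
        have h1 := hne.some_mem.2
        have h2 := hne'.some_mem.2
        rw [hcon] at h1
        exact (G.D_disj _ hYD _ hY'D hYY).ne_of_mem h1 h2 rfl
      rw [map_mul, Psi_edgeTerm K G hne', Psi_ghostTerm K G hne]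
      rw [mul_assoc (op K G (.g2 hne.some)), ← mul_assoc (op K G (.g1 hne.some)),
        opRc K G ((rowS_eq G hXC hne.some_mem.1).trans
          (rowS_eq G hXC hne'.some_mem.1).symm), if_neg hdd']
      simp

/-- the representation of the Cohn–Leavitt algebra -/
noncomputable def rep [Nonempty Vt] : CLAmbient K G →ₐ[K] Module.End K (V K Vt Ed) :=
  RingQuot.liftAlgHom K ⟨Psi K G, Psi_rel K G⟩

lemma rep_clgen [Nonempty Vt] (x : CLGen Vt Ed) :
    rep K G (clgen K G x) = genMap K G x := by
  rw [rep, clgen, RingQuot.liftAlgHom_mkAlgHom_apply, Psi_iota]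

end CLWork
namespace CLWork

open Classical L Finsupp BSG

variable {Vt Ed : Type} (K : Type) [Field K] (G : BSG Vt Ed)

noncomputable def pv (v : Vt) : RingQuot (PRel K G) := pgen K G (Sum.inl v)

noncomputable def pe (e : Ed) : RingQuot (PRel K G) := pgen K G (Sum.inr e)

lemma pvv (v w : Vt) : pv K G v * pv K G w = if v = w then pv K G v else 0 := by
  have h := RingQuot.mkAlgHom_rel K (PRel.vv (K := K) (G := G) v w)
  rw [map_mul] at h
  unfold pv pgen
  rw [h]
  by_cases hvw : v = w
  · rw [if_pos hvw, if_pos hvw]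
  · rw [if_neg hvw, if_neg hvw, map_zero]

lemma pse (e : Ed) : pv K G (G.src e) * pe K G e = pe K G e := by
  have h := RingQuot.mkAlgHom_rel K (PRel.se (K := K) (G := G) e)
  rw [map_mul] at h
  unfold pv pe pgen
  rw [h]

lemma per (e : Ed) : pe K G e * pv K G (G.rng e) = pe K G e := by
  have h := RingQuot.mkAlgHom_rel K (PRel.er (K := K) (G := G) e)
  rw [map_mul] at h
  unfold pv pe pgen
  rw [h]

lemma pv_pe (v : Vt) (e : Ed) :
    pv K G v * pe K G e = if v = G.src e then pe K G e else 0 := by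
  by_cases h : v = G.src e
  · rw [if_pos h, h, pse]
  · rw [if_neg h]
    calc pv K G v * pe K G e = pv K G v * (pv K G (G.src e) * pe K G e) := by rw [pse]
      _ = (pv K G v * pv K G (G.src e)) * pe K G e := (mul_assoc _ _ _).symm
      _ = 0 := by rw [pvv, if_neg h, zero_mul]

lemma pe_pv (e : Ed) (v : Vt) :
    pe K G e * pv K G v = if G.rng e = v then pe K G e else 0 := by
  by_cases h : G.rng e = v
  · rw [if_pos h, ← h, per]
  · rw [if_neg h]
    calc pe K G e * pv K G v = (pe K G e * pv K G (G.rng e)) * pv K G v := by rw [per]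
      _ = pe K G e * (pv K G (G.rng e) * pv K G v) := mul_assoc _ _ _
      _ = 0 := by rw [pvv, if_neg h, mul_zero]

/-- composable lists of edges -/
def Chn (l : List Ed) : Prop := l.Chain' (fun e f => G.rng e = G.src f)

noncomputable def pprod (l : List Ed) : RingQuot (PRel K G) := (l.map (pe K G)).prod

lemma pprod_cons (e : Ed) (l : List Ed) :
    pprod K G (e :: l) = pe K G e * pprod K G l := by
  rw [pprod, pprod, List.map_cons, List.prod_cons]

lemma pprod_nil : pprod K G ([] : List Ed) = 1 := rfl

lemma pv_pprod (v : Vt) (e : Ed) (l : List Ed) :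
    pv K G v * pprod K G (e :: l)
      = if v = G.src e then pprod K G (e :: l) else 0 := by
  rw [pprod_cons, ← mul_assoc, pv_pe]
  by_cases h : v = G.src e
  · rw [if_pos h, if_pos h]
  · rw [if_neg h, if_neg h, zero_mul]

lemma pprod_pv (l : List Ed) : ∀ (e : Ed) (v : Vt),
    pprod K G (e :: l) * pv K G v
      = if G.rng ((e :: l).getLast (by simp)) = v then pprod K G (e :: l) else 0 := by
  induction l with
  | nil =>
    intro e v
    rw [pprod_cons, pprod_nil, mul_one, pe_pv]
    simp
    congr
  | cons f l ih =>
    intro e v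
    rw [pprod_cons, mul_assoc, ih f v]
    have hgl : (e :: f :: l).getLast (by simp) = (f :: l).getLast (by simp) := by
      simp [List.getLast_cons]
    rw [hgl]
    by_cases h : G.rng ((f :: l).getLast (by simp)) = v
    · rw [if_pos h, if_pos h, pprod_cons]
    · rw [if_neg h, if_neg h, mul_zero]

lemma pprod_pprod (l : List Ed) : ∀ (e f : Ed) (l' : List Ed),
    pprod K G (e :: l) * pprod K G (f :: l')
      = if G.rng ((e :: l).getLast (by simp)) = G.src f
        then pprod K G ((e :: l) ++ (f :: l')) else 0 := by
  induction l with
  | nil =>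
    intro e f l'
    rw [pprod_cons, pprod_nil, mul_one]
    calc pe K G e * pprod K G (f :: l')
        = pe K G e * (pv K G (G.src f) * pprod K G (f :: l')) := by
          rw [pv_pprod, if_pos rfl]
      _ = (pe K G e * pv K G (G.src f)) * pprod K G (f :: l') := (mul_assoc _ _ _).symm
      _ = _ := by
          rw [pe_pv]
          by_cases h : G.rng e = G.src f
          · rw [if_pos h, if_pos (by simpa using h)]
            simp [List.singleton_append, pprod_cons]
          · rw [if_neg h, if_neg (by simpa using h), zero_mul]
  | cons g l ih =>
    intro e f l'
    rw [pprod_cons, mul_assoc, ih g f l']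
    have hgl : (e :: g :: l).getLast (by simp) = (g :: l).getLast (by simp) := by
      simp [List.getLast_cons]
    rw [hgl]
    by_cases h : G.rng ((g :: l).getLast (by simp)) = G.src f
    · rw [if_pos h, if_pos h]
      simp [pprod_cons]
    · rw [if_neg h, if_neg h, mul_zero]

/-- canonical path words -/
def PW (Vt Ed : Type) (G : BSG Vt Ed) : Type :=
  Vt ⊕ {l : List Ed // l ≠ [] ∧ Chn G l}

noncomputable def pmon : PW Vt Ed G → RingQuot (PRel K G)
  | .inl v => pv K G v
  | .inr l => pprod K G l.1

lemma span_closed_mul :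
    ∀ x ∈ Submodule.span K (Set.range (pmon K G)),
    ∀ y ∈ Submodule.span K (Set.range (pmon K G)),
      x * y ∈ Submodule.span K (Set.range (pmon K G)) := by
  set sp := Submodule.span K (Set.range (pmon K G)) with hsp
  have base : ∀ p q : PW Vt Ed G, pmon K G p * pmon K G q ∈ sp := by
    have hmem : ∀ p : PW Vt Ed G, pmon K G p ∈ sp :=
      fun p => Submodule.subset_span ⟨p, rfl⟩
    rintro (v | ⟨l, hl⟩) (w | ⟨l', hl'⟩)
    · rw [show pmon K G (Sum.inl v) = pv K G v from rfl,
        show pmon K G (Sum.inl w) = pv K G w from rfl, pvv]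
      split
      · exact hmem (Sum.inl v)
      · exact zero_mem _
    · obtain ⟨f, l', rfl⟩ : ∃ f t, l' = f :: t := by
        cases l' with
        | nil => exact absurd rfl hl'.1
        | cons f t => exact ⟨f, t, rfl⟩
      rw [show pmon K G (Sum.inl v) = pv K G v from rfl,
        show pmon K G (Sum.inr ⟨f :: l', hl'⟩) = pprod K G (f :: l') from rfl,
        pv_pprod]
      split
      · exact hmem (Sum.inr ⟨f :: l', hl'⟩)
      · exact zero_mem _
    · obtain ⟨e, l, rfl⟩ : ∃ e t, l = e :: t := by
        cases l with
        | nil => exact absurd rfl hl.1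
        | cons e t => exact ⟨e, t, rfl⟩
      rw [show pmon K G (Sum.inr ⟨e :: l, hl⟩) = pprod K G (e :: l) from rfl,
        show pmon K G (Sum.inl w) = pv K G w from rfl, pprod_pv]
      split
      · exact hmem (Sum.inr ⟨e :: l, hl⟩)
      · exact zero_mem _
    · obtain ⟨e, l, rfl⟩ : ∃ e t, l = e :: t := by
        cases l with
        | nil => exact absurd rfl hl.1
        | cons e t => exact ⟨e, t, rfl⟩
      obtain ⟨f, l', rfl⟩ : ∃ f t, l' = f :: t := by
        cases l' with
        | nil => exact absurd rfl hl'.1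
        | cons f t => exact ⟨f, t, rfl⟩
      rw [show pmon K G (Sum.inr ⟨e :: l, hl⟩) = pprod K G (e :: l) from rfl,
        show pmon K G (Sum.inr ⟨f :: l', hl'⟩) = pprod K G (f :: l') from rfl,
        pprod_pprod]
      split
      · rename_i hj
        have hch : Chn G ((e :: l) ++ (f :: l')) := by
          refine List.IsChain.append hl.2 hl'.2 ?_
          intro x hx y hy
          rw [List.getLast?_eq_getLast (by simp), Option.mem_def, Option.some_inj] at hx
          rw [List.head?_cons, Option.mem_def, Option.some_inj] at hy
          rw [← hx, ← hy]
          exact hj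
        exact hmem (Sum.inr ⟨(e :: l) ++ (f :: l'), by simp, hch⟩)
      · exact zero_mem _
  intro x hx y hy
  induction hx using Submodule.span_induction with
  | mem x hxm =>
    obtain ⟨p, rfl⟩ := hxm
    induction hy using Submodule.span_induction with
    | mem y hym =>
      obtain ⟨q, rfl⟩ := hym
      exact base p q
    | zero => rw [mul_zero]; exact zero_mem _
    | add y z _ _ h1 h2 => rw [mul_add]; exact add_mem h1 h2
    | smul k y _ h1 => rw [mul_smul_comm]; exact Submodule.smul_mem _ _ h1
  | zero => rw [zero_mul]; exact zero_mem _
  | add x z _ _ h1 h2 => rw [add_mul]; exact add_mem h1 h2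
  | smul k x _ h1 => rw [smul_mul_assoc]; exact Submodule.smul_mem _ _ h1

lemma palg_le_span :
    (PAlg K G : Set (RingQuot (PRel K G)))
      ⊆ (Submodule.span K (Set.range (pmon K G)) : Set (RingQuot (PRel K G))) := by
  intro x hx
  induction hx using NonUnitalAlgebra.adjoin_induction with
  | mem x hxm =>
    obtain ⟨p, rfl⟩ := hxm
    rcases p with v | e
    · exact Submodule.subset_span ⟨Sum.inl v, rfl⟩
    · refine Submodule.subset_span ⟨Sum.inr ⟨[e], by simp, by simp [Chn, List.Chain']⟩, ?_⟩
      rw [show pmon K G (Sum.inr ⟨[e], _⟩) = pprod K G [e] from rfl, pprod_cons,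
        pprod_nil, mul_one, pe, pgen]
  | add x y _ _ h1 h2 => exact add_mem h1 h2
  | zero => exact zero_mem _
  | mul x y hx' hy' h1 h2 => exact span_closed_mul K G x h1 y h2
  | smul k x _ h1 => exact Submodule.smul_mem _ _ h1

end CLWork
namespace CLWork

open Classical L Finsupp BSG

variable {Vt Ed : Type} (K : Type) [Field K] (G : BSG Vt Ed)

/-- doubling of an edge word into letters -/
def dbl : List Ed → List (L Vt Ed)
  | [] => []
  | e :: l => .a1 e :: .a2 e :: dbl l

lemma dbl_injective : Function.Injective (dbl (Vt := Vt) (Ed := Ed)) := by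
  intro l l' h
  induction l generalizing l' with
  | nil =>
    cases l' with
    | nil => rfl
    | cons f t => simp [dbl] at h
  | cons e t ih =>
    cases l' with
    | nil => simp [dbl] at h
    | cons f t' =>
      simp only [dbl, List.cons.injEq, L.a1.injEq, L.a2.injEq] at h
      rw [h.1, ih h.2.2]

noncomputable def theta : PW Vt Ed G → List (L Vt Ed)
  | .inl v => [.vx v]
  | .inr l => dbl l.1

lemma theta_injective : Function.Injective (theta G) := by
  rintro (v | ⟨l, hl⟩) (w | ⟨l', hl'⟩) h
  · simp only [theta, List.cons.injEq, L.vx.injEq] at h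
    rw [h.1]
  · exfalso
    obtain ⟨f, t, rfl⟩ : ∃ f t, l' = f :: t := by
      cases l' with
      | nil => exact absurd rfl hl'.1
      | cons f t => exact ⟨f, t, rfl⟩
    simp [theta, dbl] at h
  · exfalso
    obtain ⟨f, t, rfl⟩ : ∃ f t, l = f :: t := by
      cases l with
      | nil => exact absurd rfl hl.1
      | cons f t => exact ⟨f, t, rfl⟩
    simp [theta, dbl] at h
  · simp only [theta] at h
    refine congrArg Sum.inr ?_
    exact Subtype.ext (dbl_injective h)

lemma dbl_normal : ∀ (l : List Ed), Chn G l → NormalW G (dbl l) := by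
  intro l
  induction l with
  | nil => intro _; exact normalW_nil G
  | cons e t ih =>
    intro hch
    cases t with
    | nil =>
      exact normalW_cons G (by simp [NV]) ⟨rfl, by simp [Bad]⟩ (normalW_single G _)
        (by simp [NV])
    | cons f t' =>
      have hch' : Chn G (f :: t') := (List.isChain_cons_cons.mp hch).2
      have hef : G.rng e = G.src f := (List.isChain_cons_cons.mp hch).1
      refine normalW_cons G (by simp [NV]) ⟨rfl, by simp [Bad]⟩ ?_ (by simp [NV])
      exact normalW_cons G (by simp [NV]) ⟨by simp [lr, ls, hef], by simp [Bad]⟩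
        (ih hch') (by simp [NV])

end CLWork


/-- The natural homomorphism from the path algebra `K(E)` to the Cohn–Leavitt
path algebra `𝒜_K(Ė)` of a bi-separated graph (i.e. any `K`-algebra map that
sends vertices to vertices and edges to edges) is injective on `K(E)`. -/
theorem pathAlgebra_to_clpa_injective (K : Type) [Field K] {Vt Ed : Type} [Nonempty Vt]
    (G : BSG Vt Ed) (f : RingQuot (PRel K G) →ₐ[K] CLAmbient K G)
    (hfv : ∀ v : Vt, f (pgen K G (Sum.inl v)) = clgen K G (CLGen.vert v))
    (hfe : ∀ e : Ed, f (pgen K G (Sum.inr e)) = clgen K G (CLGen.edge e)) :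
    Set.InjOn f ↑(PAlg K G) := by
  classical
  open CLWork CLWork.L in
  set Θ : RingQuot (PRel K G) →ₐ[K] Module.End K (CLWork.V K Vt Ed) :=
    (CLWork.rep K G).comp f with hTdef
  have hTv : ∀ v, Θ (CLWork.pv K G v) = CLWork.op K G (.vx v) := by
    intro v
    rw [hTdef, AlgHom.comp_apply]
    rw [show CLWork.pv K G v = pgen K G (Sum.inl v) from rfl, hfv,
      CLWork.rep_clgen, CLWork.genMap_vert]
  have hTe : ∀ e, Θ (CLWork.pe K G e)
      = CLWork.op K G (.a1 e) * CLWork.op K G (.a2 e) := by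
    intro e
    rw [hTdef, AlgHom.comp_apply]
    rw [show CLWork.pe K G e = pgen K G (Sum.inr e) from rfl, hfe,
      CLWork.rep_clgen, CLWork.genMap_edge]
  have evl : ∀ (l : List Ed), CLWork.Chn G l → l ≠ [] →
      Θ (CLWork.pprod K G l) (CLWork.bw K []) = CLWork.bw K (CLWork.dbl l) := by
    intro l
    induction l with
    | nil => exact fun _ h => absurd rfl h
    | cons e t ih =>
      intro hch _
      rw [CLWork.pprod_cons, map_mul, Module.End.mul_apply, hTe]
      cases t with
      | nil =>
        rw [CLWork.pprod_nil, map_one, Module.End.one_apply, Module.End.mul_apply,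
          CLWork.op_bw, CLWork.act_nil, CLWork.op_bw,
          CLWork.act_cons_ok K G _ (CLWork.normalW_single G _)
            (by simp [CLWork.L.NV]) (by simp [CLWork.L.NV])
            (by simp [CLWork.L.lr, CLWork.L.ls]) (by simp [CLWork.Bad])]
        rfl
      | cons g t' =>
        have hch' : CLWork.Chn G (g :: t') := (List.isChain_cons_cons.mp hch).2
        have heg : G.rng e = G.src g := (List.isChain_cons_cons.mp hch).1
        rw [ih hch' (by simp), Module.End.mul_apply, CLWork.op_bw]
        have hdn : CLWork.NormalW G (CLWork.dbl (g :: t')) := CLWork.dbl_normal G _ hch'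
        rw [show (CLWork.dbl (g :: t') : List (CLWork.L Vt Ed))
            = .a1 g :: .a2 g :: CLWork.dbl t' from rfl] at hdn ⊢
        rw [CLWork.act_cons_ok K G _ hdn (by simp [CLWork.L.NV]) (by simp [CLWork.L.NV])
          (by simp [CLWork.L.lr, CLWork.L.ls, heg]) (by simp [CLWork.Bad]),
          CLWork.op_bw]
        have hn2 : CLWork.NormalW G
            (.a2 e :: .a1 g :: .a2 g :: CLWork.dbl t' : List (CLWork.L Vt Ed)) := by
          refine CLWork.normalW_cons G (by simp [CLWork.L.NV])
            ⟨by simp [CLWork.L.lr, CLWork.L.ls, heg], by simp [CLWork.Bad]⟩ hdn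
            (by simp [CLWork.L.NV])
        rw [CLWork.act_cons_ok K G _ hn2 (by simp [CLWork.L.NV]) (by simp [CLWork.L.NV])
          (by simp [CLWork.L.lr, CLWork.L.ls]) (by simp [CLWork.Bad])]
        rfl
  have heval : ∀ p : CLWork.PW Vt Ed G,
      Θ (CLWork.pmon K G p) (CLWork.bw K []) = CLWork.bw K (CLWork.theta G p) := by
    rintro (v | ⟨l, hl⟩)
    · rw [show CLWork.pmon K G (Sum.inl v) = CLWork.pv K G v from rfl, hTv,
        CLWork.op_bw, CLWork.act_nil]
      rfl
    · exact evl l hl.2 hl.1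
  have key : ∀ z, z ∈ PAlg K G → f z = 0 → z = 0 := by
    intro z hz hfz
    have hz' : z ∈ Submodule.span K (Set.range (CLWork.pmon K G)) :=
      CLWork.palg_le_span K G hz
    rw [Finsupp.mem_span_range_iff_exists_finsupp] at hz'
    obtain ⟨c, hc⟩ := hz'
    have hc' : (∑ p ∈ c.support, c p • CLWork.pmon K G p) = z := hc
    have hTz : Θ z = 0 := by rw [hTdef, AlgHom.comp_apply, hfz, map_zero]
    have h0 : Finsupp.mapDomain (CLWork.theta G) c = 0 := by
      have h1 : Finsupp.mapDomain (CLWork.theta G) c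
          = ∑ p ∈ c.support, Finsupp.single (CLWork.theta G p) (c p) := rfl
      rw [h1]
      have h2 : ∀ p ∈ c.support, Finsupp.single (CLWork.theta G p) (c p)
          = (Θ (c p • CLWork.pmon K G p)) (CLWork.bw K []) := by
        intro p _
        rw [map_smul, LinearMap.smul_apply, heval p, CLWork.single_eq_smul_bw]
      rw [Finset.sum_congr rfl h2, ← LinearMap.sum_apply, ← map_sum, hc', hTz]
      rfl
    have hc0 : c = 0 := by
      apply Finsupp.mapDomain_injective (CLWork.theta_injective G)
      rw [h0, Finsupp.mapDomain_zero]
    rw [← hc', hc0]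
    simp
  intro x hx y hy hxy
  have h := key (x - y) (sub_mem hx hy) (by rw [map_sub, hxy, sub_self])
  exact sub_eq_zero.mp h
end
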